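/- arXiv:2302.12546 — 5 statements merged into one kernel-verified Lean document; each statement's English description precedes it below -/
import Mathlib

section
/- Kirchhoff's theorem (cofactor form): Let G be a finite simple graph on N ≥ 2 vertices with Laplacian matrix L(G). For every vertex j, the number of spanning trees of G equals the determinant of the (N−1)×(N−1) matrix L(G)_{−j,−j} obtained from L(G) by deleting row j and column j; in particular this determinant is independent of the choice of j. -/
open Finset Matrix

set_option linter.unusedSectionVars false

namespace Kirchhoff

/-! ### Oriented incidence vectors -/

variable {V : Type*} [DecidableEq V]

/-- A chosen "head" of an unordered pair. -/
noncomputable def hd (e : Sym2 V) : V := (Quot.out e).1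

/-- A chosen "tail" of an unordered pair. -/
noncomputable def tl (e : Sym2 V) : V := (Quot.out e).2

lemma mk_hd_tl (e : Sym2 V) : s(hd e, tl e) = e := Quot.out_eq e

/-- The oriented incidence vector of an edge. -/
noncomputable def incAux (e : Sym2 V) (v : V) : ℤ :=
  if v = hd e then 1 else if v = tl e then -1 else 0

lemma hd_ne_tl {x y : V} (hxy : x ≠ y) {e : Sym2 V} (he : e = s(x, y)) : hd e ≠ tl e := by
  have h : s(hd e, tl e) = s(x, y) := by rw [mk_hd_tl, he]
  rw [Sym2.eq_iff] at h
  rcases h with ⟨h1, h2⟩ | ⟨h1, h2⟩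
  · rw [h1, h2]; exact hxy
  · rw [h1, h2]; exact hxy.symm

private lemma scalar1 {x y v : V} (hxy : x ≠ y) :
    ∀ {a b : V}, s(a, b) = s(x, y) →
      (if y = a then (1 : ℤ) else -1) * (if v = a then 1 else if v = b then -1 else 0)
        = (if v = y then 1 else 0) - (if v = x then 1 else 0) := by
  intro a b hab
  rw [Sym2.eq_iff] at hab
  rcases hab with ⟨h1, h2⟩ | ⟨h1, h2⟩ <;> subst h1 <;> subst h2 <;>
    by_cases hva : v = a <;> by_cases hvb : v = b <;> simp_all [eq_comm]

lemma sign_mul_incAux {x y v : V} (hxy : x ≠ y) (e : Sym2 V) (he : e = s(x, y)) :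
    (if y = hd e then (1 : ℤ) else -1) * incAux e v
      = (if v = y then 1 else 0) - (if v = x then 1 else 0) := by
  have h : s(hd e, tl e) = s(x, y) := by rw [mk_hd_tl, he]
  exact scalar1 hxy h

private lemma scalar2 {a b v : V} (hab : a ≠ b) :
    (if v = a then (1 : ℤ) else if v = b then -1 else 0)
      * (if v = a then 1 else if v = b then -1 else 0)
      = if v = a ∨ v = b then 1 else 0 := by
  by_cases h1 : v = a <;> by_cases h2 : v = b <;> simp_all

lemma incAux_sq {x y v : V} (hxy : x ≠ y) (e : Sym2 V) (he : e = s(x, y)) :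
    incAux e v * incAux e v = if v ∈ e then 1 else 0 := by
  have hne : hd e ≠ tl e := hd_ne_tl hxy he
  have hmem : v ∈ e ↔ v = hd e ∨ v = tl e := by
    conv_lhs => rw [← mk_hd_tl e]
    simp [Sym2.mem_iff]
  rw [incAux, scalar2 hne]
  simp [hmem]

private lemma scalar3 {a b v w : V} (hab : a ≠ b) (hvw : v ≠ w) :
    (if v = a then (1 : ℤ) else if v = b then -1 else 0)
      * (if w = a then 1 else if w = b then -1 else 0)
      = if (a = v ∧ b = w) ∨ (a = w ∧ b = v) then -1 else 0 := by
  by_cases h1 : v = a <;> by_cases h2 : v = b <;> by_cases h3 : w = a <;> by_cases h4 : w = b <;>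
    simp_all [eq_comm]

lemma incAux_mul_of_ne {v w : V} (hvw : v ≠ w) {x y : V} (hxy : x ≠ y) (e : Sym2 V)
    (he : e = s(x, y)) :
    incAux e v * incAux e w = if e = s(v, w) then -1 else 0 := by
  have hne : hd e ≠ tl e := hd_ne_tl hxy he
  have hiff : e = s(v, w) ↔ (hd e = v ∧ tl e = w) ∨ (hd e = w ∧ tl e = v) := by
    conv_lhs => rw [← mk_hd_tl e]
    rw [Sym2.eq_iff]
  rw [incAux, incAux, scalar3 hne hvw]
  simp only [hiff]

/-! ### Telescoping sums along walks -/

lemma telescope {G : SimpleGraph V} {u w : V} (q : G.Walk u w) (f : V → ℤ) :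
    (q.darts.map (fun d => f d.toProd.2 - f d.toProd.1)).sum = f w - f u := by
  induction q with
  | nil => simp
  | cons h q ih => simp [ih]; try ring

/-- Sign of a dart relative to the chosen orientation of its edge. -/
noncomputable def dartSign {G : SimpleGraph V} (d : G.Dart) : ℤ :=
  if d.toProd.2 = hd d.edge then 1 else -1

lemma dartSign_mul {G : SimpleGraph V} (d : G.Dart) (v : V) :
    dartSign d * incAux d.edge v
      = (if v = d.toProd.2 then 1 else 0) - (if v = d.toProd.1 then 1 else 0) :=
  sign_mul_incAux d.adj.ne d.edge rfl

/-! ### list sum helpers -/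

lemma sum_comm_list {α β : Type*} (l : List α) (s : Finset β) (f : β → α → ℤ) :
    ∑ i ∈ s, (l.map (f i)).sum = (l.map (fun d => ∑ i ∈ s, f i d)).sum := by
  induction l with
  | nil => simp
  | cons a l ih => simp [Finset.sum_add_distrib, ih]

lemma sum_single_of_nodup_map {α β : Type*} [DecidableEq β] (l : List α) (f : α → β)
    (g : α → ℤ) (hnd : (l.map f).Nodup) {a : α} (ha : a ∈ l) :
    (l.map (fun x => if f x = f a then g x else 0)).sum = g a := by
  induction l with
  | nil => simp at ha
  | cons b l ih =>
    simp only [List.map_cons, List.nodup_cons, List.mem_map] at hnd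
    rcases List.mem_cons.1 ha with rfl | ha'
    · simp only [List.map_cons, List.sum_cons, if_pos rfl]
      have : (l.map (fun x => if f x = f a then g x else 0)) = l.map (fun _ => (0 : ℤ)) := by
        apply List.map_congr_left
        intro x hx
        have : f x ≠ f a := fun hc => hnd.1 ⟨x, hx, hc⟩
        simp [this]
      simp [this]
    · have hba : f b ≠ f a := fun hc => hnd.1 ⟨a, ha', hc.symm⟩
      simp only [List.map_cons, List.sum_cons, if_neg hba, zero_add]
      exact ih hnd.2 ha'

/-! ### Rectangular Cauchy–Binet style expansion for `det (A * Aᵀ)` -/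

section CB

variable {n : Type*} {m : Type*} [Fintype n] [Fintype m] [DecidableEq n] [DecidableEq m]
variable {R : Type*} [CommRing R]

private lemma det_mul_aux_rect {A : Matrix n m R} {B : Matrix m n R} {p : n → m}
    (H : ¬Function.Injective p) :
    (∑ σ : Equiv.Perm n,
      ((Equiv.Perm.sign σ : ℤ) : R) * ∏ x, A (σ x) (p x) * B (p x) x) = 0 := by
  obtain ⟨i, j, hpij, hij⟩ : ∃ i j, p i = p j ∧ i ≠ j := by
    rw [Function.Injective] at H
    push_neg at H
    obtain ⟨i, j, h1, h2⟩ := H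
    exact ⟨i, j, h1, h2⟩
  exact Finset.sum_involution (fun σ _ => σ * Equiv.swap i j)
    (fun σ _ => by
      have : (∏ x, A (σ x) (p x)) = ∏ x, A ((σ * Equiv.swap i j) x) (p x) :=
        Fintype.prod_equiv (Equiv.swap i j) _ _ (by
          simp [Equiv.apply_swap_eq_self hpij])
      simp [this, Equiv.Perm.sign_swap hij, prod_mul_distrib]
      try ring)
    (fun σ _ _ => (not_congr Equiv.mul_swap_eq_iff).mpr hij)
    (fun _ _ => mem_univ _) fun σ _ => Equiv.mul_swap_involutive i j σ

lemma det_rect_mul (A : Matrix n m R) (B : Matrix m n R) :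
    det (A * B) = ∑ p ∈ univ.filter (fun p : n → m => Function.Injective p),
      (∏ i, B (p i) i) * det (A.submatrix id p) := by
  have step1 : det (A * B)
      = ∑ p : n → m, ∑ σ : Equiv.Perm n,
          ((Equiv.Perm.sign σ : ℤ) : R) * ∏ i, A (σ i) (p i) * B (p i) i := by
    simp only [det_apply', mul_apply, prod_univ_sum, mul_sum, Fintype.piFinset_univ]
    rw [Finset.sum_comm]
  rw [step1]
  rw [← Finset.sum_subset (Finset.filter_subset (fun p : n → m => Function.Injective p) univ)
      (fun p _ hp => det_mul_aux_rect (by simpa using hp))]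
  refine Finset.sum_congr rfl fun p hp => ?_
  have h1 : ∑ σ : Equiv.Perm n, ((Equiv.Perm.sign σ : ℤ) : R) * ∏ i, A (σ i) (p i) * B (p i) i
      = det (Matrix.of fun k i => B (p i) i * (A.submatrix id p) k i) := by
    rw [det_apply']
    refine Finset.sum_congr rfl fun σ _ => ?_
    congr 1
    refine Finset.prod_congr rfl fun i _ => ?_
    simp [Matrix.submatrix_apply, mul_comm]
  rw [h1]
  exact det_mul_row (fun i => B (p i) i) (A.submatrix id p)

variable (A : Matrix n m R)

/-- The squared minor determinant corresponding to a subset `S` of columns. -/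
noncomputable def sqdet (S : Finset m) : R :=
  if h : ∃ p : n → m, Function.Injective p ∧ Finset.image p univ = S then
    det (A.submatrix id h.choose) ^ 2
  else 0

lemma exists_perm_comp {p q : n → m} (hp : Function.Injective p) (hq : Function.Injective q)
    (him : Finset.image p univ = Finset.image q univ) :
    ∃ σ : Equiv.Perm n, p = q ∘ σ := by
  have hrange : Set.range p = Set.range q := by
    have := congrArg (fun s : Finset m => (s : Set m)) him
    simpa [Finset.coe_image, Set.image_univ] using this
  let e1 : n ≃ Set.range p := Equiv.ofInjective p hp
  let e2 : n ≃ Set.range q := Equiv.ofInjective q hq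
  refine ⟨e1.trans ((Equiv.setCongr hrange).trans e2.symm), ?_⟩
  funext i
  have : q ((e2.symm) (Equiv.setCongr hrange (e1 i))) = ((Equiv.setCongr hrange) (e1 i) : m) :=
    congrArg Subtype.val (e2.apply_symm_apply _)
  simpa [e1] using this.symm

lemma sqdet_eq {p : n → m} (hp : Function.Injective p) {S : Finset m}
    (him : Finset.image p univ = S) :
    sqdet A S = det (A.submatrix id p) ^ 2 := by
  have h : ∃ p : n → m, Function.Injective p ∧ Finset.image p univ = S := ⟨p, hp, him⟩
  rw [sqdet, dif_pos h]
  obtain ⟨hq, hqim⟩ := h.choose_spec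
  obtain ⟨σ, hσ⟩ := exists_perm_comp hp hq (by rw [him, hqim])
  have hsub : A.submatrix id p = (A.submatrix id h.choose).submatrix id σ := by
    rw [hσ]; rfl
  rw [hsub, det_permute']
  rcases Int.units_eq_one_or (Equiv.Perm.sign σ) with h1 | h1 <;> simp [h1, mul_pow]

lemma sqdet_eq_zero {S : Finset m} (h : S.card ≠ Fintype.card n) : sqdet A S = 0 := by
  rw [sqdet, dif_neg]
  rintro ⟨p, hp, him⟩
  apply h
  rw [← him, Finset.card_image_of_injective _ hp, Finset.card_univ]

lemma det_mul_transpose_eq_sum_sqdet :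
    det (A * Aᵀ) = ∑ S : Finset m, sqdet A S := by
  rw [det_rect_mul]
  rw [← Finset.sum_fiberwise_of_maps_to (g := fun p : n → m => Finset.image p univ)
    (fun p _ => Finset.mem_univ _)]
  refine Finset.sum_congr rfl fun S _ => ?_
  by_cases h : ∃ p : n → m, Function.Injective p ∧ Finset.image p univ = S
  · obtain ⟨p0, hp0, him0⟩ := h
    rw [sqdet_eq A hp0 him0]
    have hmem : ∀ σ : Equiv.Perm n, (p0 ∘ σ) ∈ (univ.filter
        (fun p : n → m => Function.Injective p)).filter (fun p => Finset.image p univ = S) := by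
      intro σ
      simp only [Finset.mem_filter, Finset.mem_univ, true_and]
      refine ⟨hp0.comp σ.injective, ?_⟩
      rw [← him0]
      ext x
      simp only [Finset.mem_image, Finset.mem_univ, true_and, Function.comp_apply]
      constructor
      · rintro ⟨i, rfl⟩; exact ⟨σ i, rfl⟩
      · rintro ⟨i, rfl⟩; exact ⟨σ.symm i, by simp⟩
    have hsum : ∑ f ∈ (univ.filter (fun p : n → m => Function.Injective p)).filter
          (fun p => Finset.image p univ = S),
        (∏ i, Aᵀ (f i) i) * det (A.submatrix id f)
        = ∑ σ : Equiv.Perm n,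
            (∏ i, Aᵀ ((p0 ∘ σ) i) i) * det (A.submatrix id (p0 ∘ σ)) := by
      refine (Finset.sum_bij (fun (σ : Equiv.Perm n) _ => p0 ∘ σ) (fun σ _ => hmem σ)
        ?_ ?_ ?_).symm
      · intro σ1 _ σ2 _ heq
        apply Equiv.ext
        intro i
        exact hp0 (congrFun heq i)
      · intro f hf
        simp only [Finset.mem_filter, Finset.mem_univ, true_and] at hf
        obtain ⟨σ, hσ⟩ := exists_perm_comp hf.1 hp0 (by rw [hf.2, him0])
        exact ⟨σ, Finset.mem_univ _, hσ.symm⟩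
      · intro σ _
        rfl
    rw [hsum]
    have key : ∀ σ : Equiv.Perm n,
        (∏ i, Aᵀ ((p0 ∘ σ) i) i) * det (A.submatrix id (p0 ∘ σ))
        = (((Equiv.Perm.sign σ : ℤ) : R) * ∏ i, A i (p0 (σ i))) * det (A.submatrix id p0) := by
      intro σ
      have h1 : A.submatrix id (p0 ∘ σ) = (A.submatrix id p0).submatrix id σ := rfl
      rw [h1, det_permute']
      simp only [transpose_apply, Function.comp_apply]
      ring
    rw [Finset.sum_congr rfl (fun σ _ => key σ), ← Finset.sum_mul]
    have h2 : ∑ σ : Equiv.Perm n, ((Equiv.Perm.sign σ : ℤ) : R) * ∏ i, A i (p0 (σ i))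
        = det ((A.submatrix id p0)ᵀ) := by
      rw [det_apply']
      exact Finset.sum_congr rfl fun σ _ => rfl
    rw [h2, det_transpose, sq]
  · rw [sqdet, dif_neg h]
    apply Finset.sum_eq_zero
    intro p hp
    simp only [Finset.mem_filter, Finset.mem_univ, true_and] at hp
    exact absurd ⟨p, hp.1, hp.2⟩ h

end CB


/-! ### The incidence matrix of a graph and the Laplacian -/

section Graph

variable [Fintype V] (G : SimpleGraph V) [DecidableRel G.Adj]

/-- The oriented incidence matrix. -/
noncomputable def inc : Matrix V ↥G.edgeFinset ℤ := fun v e => incAux e.val v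

lemma exists_rep_of_mem_edgeSet {G' : SimpleGraph V} {e : Sym2 V} (he : e ∈ G'.edgeSet) :
    ∃ x y, G'.Adj x y ∧ e = s(x, y) := by
  induction e with
  | _ x y => exact ⟨x, y, (SimpleGraph.mem_edgeSet _).1 he, rfl⟩

lemma lap_eq : G.lapMatrix ℤ = inc G * (inc G)ᵀ := by
  ext v w
  rw [mul_apply]
  by_cases hvw : v = w
  · subst hvw
    have h1 : ∀ e : ↥G.edgeFinset, inc G v e * (inc G)ᵀ e v
        = if v ∈ e.val then 1 else 0 := by
      intro e
      have he : e.val ∈ G.edgeSet := SimpleGraph.mem_edgeFinset.1 e.2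
      obtain ⟨x, y, hadj, hrep⟩ := exists_rep_of_mem_edgeSet he
      exact incAux_sq hadj.ne e.val hrep
    rw [Finset.sum_congr rfl fun e _ => h1 e]
    rw [Finset.sum_coe_sort G.edgeFinset (fun e => if v ∈ e then (1 : ℤ) else 0)]
    have h2 : ∑ e ∈ G.edgeFinset, (if v ∈ e then (1 : ℤ) else 0)
        = (G.edgeFinset.filter (fun e => v ∈ e)).card := by
      simp [Finset.sum_boole]
    rw [h2]
    have h3 : G.edgeFinset.filter (fun e => v ∈ e) = G.incidenceFinset v := by
      ext e
      simp [SimpleGraph.mem_incidenceFinset, SimpleGraph.incidenceSet,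
        SimpleGraph.mem_edgeFinset, and_comm]
    rw [h3, SimpleGraph.card_incidenceFinset_eq_degree]
    simp [SimpleGraph.lapMatrix, SimpleGraph.degMatrix]
  · have h1 : ∀ e : ↥G.edgeFinset, inc G v e * (inc G)ᵀ e w
        = if e.val = s(v, w) then -1 else 0 := by
      intro e
      have he : e.val ∈ G.edgeSet := SimpleGraph.mem_edgeFinset.1 e.2
      obtain ⟨x, y, hadj, hrep⟩ := exists_rep_of_mem_edgeSet he
      exact incAux_mul_of_ne hvw hadj.ne e.val hrep
    rw [Finset.sum_congr rfl fun e _ => h1 e]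
    rw [Finset.sum_coe_sort G.edgeFinset (fun e => if e = s(v, w) then (-1 : ℤ) else 0)]
    rw [Finset.sum_ite_eq' G.edgeFinset s(v,w) (fun _ => (-1 : ℤ))]
    have : s(v, w) ∈ G.edgeFinset ↔ G.Adj v w := by
      rw [SimpleGraph.mem_edgeFinset, SimpleGraph.mem_edgeSet]
    rw [if_congr this rfl rfl]
    simp only [SimpleGraph.lapMatrix, SimpleGraph.degMatrix, Matrix.sub_apply,
      Matrix.diagonal_apply_ne _ hvw, SimpleGraph.adjMatrix_apply, zero_sub]
    split_ifs <;> norm_num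

variable (j : V)

/-- The incidence matrix with the row of `j` deleted. -/
noncomputable def Ainc : Matrix {i : V // i ≠ j} ↥G.edgeFinset ℤ :=
  (inc G).submatrix Subtype.val id

lemma lap_submatrix :
    (G.lapMatrix ℤ).submatrix (fun i : {i : V // i ≠ j} => (i : V))
      (fun i : {i : V // i ≠ j} => (i : V)) = Ainc G j * (Ainc G j)ᵀ := by
  rw [lap_eq]
  ext i k
  simp [mul_apply, Ainc]

/-- The spanning subgraph associated to a set of edges. -/
def graphOf (S : Finset ↥G.edgeFinset) : SimpleGraph V :=
  SimpleGraph.fromEdgeSet ↑(S.image Subtype.val)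

lemma graphOf_le (S : Finset ↥G.edgeFinset) : graphOf G S ≤ G := by
  intro a b hab
  rw [graphOf, SimpleGraph.fromEdgeSet_adj] at hab
  obtain ⟨h1, _⟩ := hab
  rw [Finset.mem_coe, Finset.mem_image] at h1
  obtain ⟨e, _, he⟩ := h1
  have := SimpleGraph.mem_edgeFinset.1 e.2
  rw [he] at this
  exact (SimpleGraph.mem_edgeSet _).1 this

lemma edgeSet_graphOf (S : Finset ↥G.edgeFinset) :
    (graphOf G S).edgeSet = ↑(S.image Subtype.val) := by
  rw [graphOf, SimpleGraph.edgeSet_fromEdgeSet]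
  ext e
  simp only [Set.mem_diff, Finset.mem_coe, Finset.mem_image, Set.mem_setOf_eq]
  constructor
  · rintro ⟨h, _⟩; exact h
  · rintro ⟨a, ha, rfl⟩
    have := SimpleGraph.mem_edgeFinset.1 a.2
    exact ⟨⟨a, ha, rfl⟩, G.not_isDiag_of_mem_edgeSet this⟩

lemma exists_index {S : Finset ↥G.edgeFinset} {p : {i : V // i ≠ j} → ↥G.edgeFinset}
    (him : Finset.image p univ = S) {e : Sym2 V} (he : e ∈ (graphOf G S).edgeSet) :
    ∃ i, (p i).val = e := by
  rw [edgeSet_graphOf, Finset.mem_coe, Finset.mem_image] at he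
  obtain ⟨a, haS, hav⟩ := he
  rw [← him, Finset.mem_image] at haS
  obtain ⟨i, _, hi⟩ := haS
  exact ⟨i, by rw [hi, hav]⟩

/-- The central computation: pairing incidence columns against the signed indicator
vector of a walk telescopes. -/
lemma walk_sum {S : Finset ↥G.edgeFinset} {p : {i : V // i ≠ j} → ↥G.edgeFinset}
    (hp : Function.Injective p) (him : Finset.image p univ = S) {u w : V}
    (q : (graphOf G S).Walk u w) (v : V) :
    ∑ i : {i : V // i ≠ j}, incAux (p i).val v *
        (q.darts.map (fun d => if d.edge = (p i).val then dartSign d else 0)).sum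
      = (if v = w then 1 else 0) - (if v = u then 1 else 0) := by
  have step1 : ∀ i : {i : V // i ≠ j}, incAux (p i).val v *
        (q.darts.map (fun d => if d.edge = (p i).val then dartSign d else 0)).sum
      = (q.darts.map (fun d =>
          incAux (p i).val v * (if d.edge = (p i).val then dartSign d else 0))).sum := by
    intro i
    rw [List.sum_map_mul_left]
  rw [Finset.sum_congr rfl fun i _ => step1 i, sum_comm_list]
  have step2 : ∀ d ∈ q.darts,
      (∑ i : {i : V // i ≠ j},
        incAux (p i).val v * (if d.edge = (p i).val then dartSign d else 0))
      = dartSign d * incAux d.edge v := by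
    intro d hd
    have hde : d.edge ∈ (graphOf G S).edgeSet :=
      q.edges_subset_edgeSet (List.mem_map_of_mem hd)
    obtain ⟨i0, hi0⟩ := exists_index G j him hde
    rw [Finset.sum_eq_single i0]
    · rw [if_pos hi0.symm, hi0, mul_comm]
    · intro i _ hne
      have : d.edge ≠ (p i).val := by
        rw [← hi0]
        intro hc
        exact hne (hp (Subtype.ext hc.symm))
      rw [if_neg this, mul_zero]
    · intro h
      exact absurd (Finset.mem_univ i0) h
  rw [List.map_congr_left step2]
  have step3 : (q.darts.map (fun d => dartSign d * incAux d.edge v)).sum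
      = (q.darts.map (fun d => (fun z => if v = z then (1 : ℤ) else 0) d.toProd.2
          - (fun z => if v = z then (1 : ℤ) else 0) d.toProd.1)).sum := by
    apply congrArg
    apply List.map_congr_left
    intro d _
    exact dartSign_mul d v
  rw [step3]
  exact telescope q (fun z => if v = z then (1 : ℤ) else 0)

lemma det_eq_zero_of_cycle {S : Finset ↥G.edgeFinset} {p : {i : V // i ≠ j} → ↥G.edgeFinset}
    (hp : Function.Injective p) (him : Finset.image p univ = S) {u : V}
    (c : (graphOf G S).Walk u u) (hc : c.IsCycle) :
    det ((Ainc G j).submatrix id p) = 0 := by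
  rw [← Matrix.exists_mulVec_eq_zero_iff]
  refine ⟨fun i => (c.darts.map (fun d => if d.edge = (p i).val then dartSign d else 0)).sum,
    ?_, ?_⟩
  · -- the vector is nonzero
    have hlen : c.darts ≠ [] := by
      intro hnil
      have h3 := hc.three_le_length
      have : c.darts.length = c.length := SimpleGraph.Walk.length_darts c
      rw [hnil] at this
      simp at this
      omega
    obtain ⟨d0, hd0⟩ := List.exists_mem_of_ne_nil _ hlen
    have hde : d0.edge ∈ (graphOf G S).edgeSet :=
      c.edges_subset_edgeSet (List.mem_map_of_mem hd0)
    obtain ⟨i0, hi0⟩ := exists_index G j him hde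
    intro hzero
    have hnd : (c.darts.map SimpleGraph.Dart.edge).Nodup := hc.edges_nodup
    have := sum_single_of_nodup_map c.darts SimpleGraph.Dart.edge dartSign hnd hd0
    have heval := congrFun hzero i0
    rw [hi0] at heval
    simp only [Pi.zero_apply] at heval
    rw [this] at heval
    unfold dartSign at heval
    split_ifs at heval <;> omega
  · funext k
    simp only [Matrix.mulVec, dotProduct, Pi.zero_apply]
    have : ∀ i, (Ainc G j).submatrix id p k i = incAux (p i).val k.val := fun i => rfl
    rw [Finset.sum_congr rfl fun i _ => by rw [this i]]
    rw [walk_sum G j hp him c k.val]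
    simp

lemma det_eq_zero_of_not_connected {S : Finset ↥G.edgeFinset}
    {p : {i : V // i ≠ j} → ↥G.edgeFinset}
    (hp : Function.Injective p) (him : Finset.image p univ = S)
    (hnc : ¬(graphOf G S).Connected) :
    det ((Ainc G j).submatrix id p) = 0 := by
  set H := graphOf G S with hH
  classical
  obtain ⟨u, hu⟩ : ∃ u, ¬H.Reachable j u := by
    by_contra h
    push_neg at h
    haveI : Nonempty V := ⟨j⟩
    exact hnc ⟨fun a b => (h a).symm.trans (h b)⟩
  have huj : u ≠ j := fun h => hu (h ▸ SimpleGraph.Reachable.refl u)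
  set X : V → ℤ := fun v => if v = j then 0 else if H.Reachable u v then 1 else 0 with hX
  have hXadj : ∀ a b : V, H.Adj a b → X a = X b := by
    intro a b hab
    by_cases haj : a = j
    · have hbj : b ≠ j := fun h => hab.ne (haj.trans h.symm)
      have hjb : H.Adj j b := by rw [← haj]; exact hab
      have hnr : ¬H.Reachable u b := fun hr => hu (hjb.reachable.trans hr.symm)
      simp [hX, haj, hbj, hnr]
    · by_cases hbj : b = j
      · have hja : H.Adj j a := by rw [← hbj]; exact hab.symm
        have hnr : ¬H.Reachable u a := fun hr => hu (hja.reachable.trans hr.symm)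
        simp [hX, haj, hbj, hnr]
      · have hiff : H.Reachable u a ↔ H.Reachable u b :=
          ⟨fun h => h.trans hab.reachable, fun h => h.trans hab.symm.reachable⟩
        simp only [hX, if_neg haj, if_neg hbj]
        rw [if_congr hiff rfl rfl]
  rw [← Matrix.exists_vecMul_eq_zero_iff]
  refine ⟨fun k => X k.val, ?_, ?_⟩
  · intro hzero
    have h1 := congrFun hzero ⟨u, huj⟩
    simp only [Pi.zero_apply] at h1
    have h2 : X u = 1 := by simp [hX, huj, SimpleGraph.Reachable.refl]
    rw [h1] at h2
    exact one_ne_zero h2.symm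
  · funext i
    simp only [Matrix.vecMul, dotProduct, Pi.zero_apply]
    have hent : ∀ k : {i : V // i ≠ j},
        X k.val * (Ainc G j).submatrix id p k i = X k.val * incAux (p i).val k.val :=
      fun k => rfl
    rw [Finset.sum_congr rfl fun k _ => hent k]
    have hsub : ∑ k : {i : V // i ≠ j}, X k.val * incAux (p i).val k.val
        = ∑ v ∈ Finset.univ.erase j, X v * incAux (p i).val v := by
      exact (Finset.sum_subtype (Finset.univ.erase j)
        (by intro x; simp [Finset.mem_erase]) (fun v => X v * incAux (p i).val v)).symm
    rw [hsub]
    have hj0 : X j * incAux (p i).val j = 0 := by simp [hX]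
    rw [Finset.sum_erase (f := fun v => X v * incAux (p i).val v) Finset.univ hj0]
    -- now the full sum
    have hmem : (p i).val ∈ H.edgeSet := by
      rw [hH, edgeSet_graphOf]
      rw [Finset.mem_coe, Finset.mem_image]
      exact ⟨p i, by rw [← him]; exact Finset.mem_image_of_mem p (Finset.mem_univ i), rfl⟩
    have hadj : H.Adj (hd (p i).val) (tl (p i).val) := by
      rw [← SimpleGraph.mem_edgeSet, mk_hd_tl]
      exact hmem
    have hne : hd (p i).val ≠ tl (p i).val := hadj.ne
    have hfull : ∑ v : V, X v * incAux (p i).val v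
        = X (hd (p i).val) - X (tl (p i).val) := by
      have hterm : ∀ v : V, X v * incAux (p i).val v
          = (if v = hd (p i).val then X v else 0) + (if v = tl (p i).val then -X v else 0) := by
        intro v
        rw [incAux]
        split_ifs with h1 h2 <;> simp_all
      rw [Finset.sum_congr rfl fun v _ => hterm v, Finset.sum_add_distrib]
      rw [Finset.sum_ite_eq' Finset.univ (hd (p i).val) (fun v => X v)]
      rw [Finset.sum_ite_eq' Finset.univ (tl (p i).val) (fun v => -X v)]
      simp [sub_eq_add_neg]
    rw [hfull, hXadj _ _ hadj, sub_self]

lemma det_sq_eq_one_of_tree {S : Finset ↥G.edgeFinset}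
    {p : {i : V // i ≠ j} → ↥G.edgeFinset}
    (hp : Function.Injective p) (him : Finset.image p univ = S)
    (ht : (graphOf G S).IsTree) :
    det ((Ainc G j).submatrix id p) ^ 2 = 1 := by
  set H := graphOf G S with hH
  have hconn := ht.isConnected.preconnected
  set M := (Ainc G j).submatrix id p with hM
  -- build a right inverse from walks
  have hwalk : ∀ k : {i : V // i ≠ j}, (H.Walk j k.val) := fun k => (hconn j k.val).some
  set P : Matrix {i : V // i ≠ j} {i : V // i ≠ j} ℤ := fun i k =>
    ((hwalk k).darts.map (fun d => if d.edge = (p i).val then dartSign d else 0)).sum with hP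
  have hMP : M * P = 1 := by
    ext k k'
    rw [mul_apply]
    have hent : ∀ i, M k i * P i k' = incAux (p i).val k.val *
        ((hwalk k').darts.map (fun d => if d.edge = (p i).val then dartSign d else 0)).sum :=
      fun i => rfl
    rw [Finset.sum_congr rfl fun i _ => hent i, walk_sum G j hp him (hwalk k') k.val]
    have : (k.val = j) = False := by simp [k.2]
    by_cases hkk : k = k'
    · subst hkk
      simp [Matrix.one_apply, k.2]
    · have : k.val ≠ k'.val := fun h => hkk (Subtype.ext h)
      simp [Matrix.one_apply, hkk, this, k.2]
  have hdet : det M * det P = 1 := by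
    rw [← det_mul, hMP, det_one]
  have : IsUnit (det M) := IsUnit.of_mul_eq_one _ hdet
  rcases Int.isUnit_iff.1 this with h | h <;> rw [h] <;> norm_num

lemma card_eq_of_tree {S : Finset ↥G.edgeFinset} (ht : (graphOf G S).IsTree) :
    S.card = Fintype.card {i : V // i ≠ j} := by
  letI : Fintype ↥(graphOf G S).edgeSet := Fintype.ofFinite _
  have h1 := ht.card_edgeFinset
  have h2 : (graphOf G S).edgeFinset = S.image Subtype.val := by
    apply Finset.coe_injective
    rw [SimpleGraph.coe_edgeFinset, edgeSet_graphOf]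
  have h3 : (S.image Subtype.val).card = S.card :=
    Finset.card_image_of_injective _ Subtype.val_injective
  have h4 : Fintype.card {i : V // i ≠ j} = Fintype.card V - 1 := by
    rw [Fintype.card_subtype_compl, Fintype.card_subtype_eq]
  have h5 : 1 ≤ Fintype.card V := Fintype.card_pos_iff.2 ⟨j⟩
  rw [h2, h3] at h1
  omega

lemma enumeration_of_card {S : Finset ↥G.edgeFinset}
    (hcard : S.card = Fintype.card {i : V // i ≠ j}) :
    ∃ p : {i : V // i ≠ j} → ↥G.edgeFinset,
      Function.Injective p ∧ Finset.image p univ = S := by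
  have hc : Fintype.card {i : V // i ≠ j} = Fintype.card ↥S := by
    rw [Fintype.card_coe, hcard]
  let e := Fintype.equivOfCardEq hc
  refine ⟨fun i => (e i).val, ?_, ?_⟩
  · exact Subtype.val_injective.comp e.injective
  · ext x
    simp only [Finset.mem_image, Finset.mem_univ, true_and]
    constructor
    · rintro ⟨i, rfl⟩; exact (e i).2
    · intro hx; exact ⟨e.symm ⟨x, hx⟩, by simp⟩

lemma sqdet_tree {S : Finset ↥G.edgeFinset} (ht : (graphOf G S).IsTree) :
    sqdet (Ainc G j) S = 1 := by
  obtain ⟨p, hp, him⟩ := enumeration_of_card G j (card_eq_of_tree G j ht)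
  rw [sqdet_eq _ hp him, det_sq_eq_one_of_tree G j hp him ht]

lemma sqdet_not_tree {S : Finset ↥G.edgeFinset} (ht : ¬(graphOf G S).IsTree) :
    sqdet (Ainc G j) S = 0 := by
  by_cases hcard : S.card = Fintype.card {i : V // i ≠ j}
  · obtain ⟨p, hp, him⟩ := enumeration_of_card G j hcard
    rw [sqdet_eq _ hp him]
    by_cases hconn : (graphOf G S).Connected
    · -- must contain a cycle
      have hnac : ¬(graphOf G S).IsAcyclic := fun hac => ht ⟨hconn, hac⟩
      rw [SimpleGraph.IsAcyclic] at hnac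
      push_neg at hnac
      obtain ⟨v, c, hc⟩ := hnac
      rw [det_eq_zero_of_cycle G j hp him c hc]
      ring
    · rw [det_eq_zero_of_not_connected G j hp him hconn]
      ring
  · exact sqdet_eq_zero _ hcard

lemma graphOf_injective : Function.Injective (graphOf G) := by
  intro S S' h
  have h1 : ↑(S.image Subtype.val) = (↑(S'.image Subtype.val) : Set (Sym2 V)) := by
    rw [← edgeSet_graphOf, ← edgeSet_graphOf, h]
  have h2 : S.image Subtype.val = S'.image Subtype.val := Finset.coe_injective h1
  ext x
  constructor
  · intro hx
    have : x.val ∈ S'.image Subtype.val := h2 ▸ Finset.mem_image_of_mem _ hx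
    rw [Finset.mem_image] at this
    obtain ⟨a, ha, hav⟩ := this
    rwa [← Subtype.ext hav.symm] at ha
  · intro hx
    have : x.val ∈ S.image Subtype.val := h2 ▸ Finset.mem_image_of_mem _ hx
    rw [Finset.mem_image] at this
    obtain ⟨a, ha, hav⟩ := this
    rwa [← Subtype.ext hav.symm] at ha

end Graph

end Kirchhoff

/-- The number of spanning trees of a simple graph `G`: the number of subgraphs
(on the full vertex set) that are contained in `G` and are trees. -/
noncomputable def spanningTreeCount {V : Type*} (G : SimpleGraph V) : ℕ :=
  Nat.card {H : SimpleGraph V // H ≤ G ∧ H.IsTree}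

/-- **Kirchhoff's theorem (cofactor form).**  For a finite simple graph `G` on `N ≥ 2`
vertices and any vertex `j`, the number of spanning trees of `G` equals the determinant
of the Laplacian matrix with row and column `j` removed; in particular this determinant
does not depend on the choice of `j`. -/
theorem kirchhoff_cofactor_form {V : Type*} [Fintype V] [DecidableEq V]
    (G : SimpleGraph V) [DecidableRel G.Adj] {N : ℕ} (hN : Fintype.card V = N)
    (h2 : 2 ≤ N) (j : V) :
    (spanningTreeCount G : ℤ) =
      ((G.lapMatrix ℤ).submatrix
        (fun i : {i : V // i ≠ j} => (i : V)) (fun i : {i : V // i ≠ j} => (i : V))).det := by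
  classical
  rw [Kirchhoff.lap_submatrix G j, Kirchhoff.det_mul_transpose_eq_sum_sqdet]
  have hsum : ∑ S : Finset ↥G.edgeFinset, Kirchhoff.sqdet (Kirchhoff.Ainc G j) S
      = ∑ S : Finset ↥G.edgeFinset,
          (if (Kirchhoff.graphOf G S).IsTree then (1 : ℤ) else 0) :=
    Finset.sum_congr rfl fun S _ => by
      by_cases ht : (Kirchhoff.graphOf G S).IsTree
      · rw [Kirchhoff.sqdet_tree G j ht, if_pos ht]
      · rw [Kirchhoff.sqdet_not_tree G j ht, if_neg ht]
  rw [hsum, Finset.sum_boole]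
  have hbij : Function.Bijective
      (fun S : {S : Finset ↥G.edgeFinset // (Kirchhoff.graphOf G S).IsTree} =>
        (⟨Kirchhoff.graphOf G S.val, Kirchhoff.graphOf_le G S.val, S.2⟩ :
          {H : SimpleGraph V // H ≤ G ∧ H.IsTree})) := by
    constructor
    · intro S S' h
      exact Subtype.ext (Kirchhoff.graphOf_injective G (congrArg Subtype.val h))
    · rintro ⟨H, hle, htree⟩
      letI : Fintype ↥H.edgeSet := Fintype.ofFinite _
      have hsub : ∀ e ∈ H.edgeFinset, e ∈ G.edgeFinset := by
        intro e he
        rw [SimpleGraph.mem_edgeFinset] at he ⊢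
        exact SimpleGraph.edgeSet_mono hle he
      set S : Finset ↥G.edgeFinset := H.edgeFinset.attach.image
        (fun e => ⟨e.val, hsub e.val e.2⟩) with hS
      have himg : S.image Subtype.val = H.edgeFinset := by
        rw [hS, Finset.image_image]
        exact Finset.attach_image_val
      have hgr : Kirchhoff.graphOf G S = H := by
        rw [Kirchhoff.graphOf, himg, SimpleGraph.coe_edgeFinset,
          SimpleGraph.fromEdgeSet_edgeSet]
      exact ⟨⟨S, by rw [hgr]; exact htree⟩, Subtype.ext hgr⟩
  have hcount : spanningTreeCount G
      = #(Finset.univ.filter fun S : Finset ↥G.edgeFinset =>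
          (Kirchhoff.graphOf G S).IsTree) := by
    rw [spanningTreeCount, ← Nat.card_eq_of_bijective _ hbij, Nat.card_eq_fintype_card,
      Fintype.card_subtype]
  rw [hcount]
end

section
/- Compatible spanning trees (product decomposition): Let G be a finite simple graph on vertex set V and let P = {P_1, …, P_K} be a partition of V into K nonempty blocks. Then the number of spanning trees τ of G such that P ≺ τ equals (Π_{k=1}^{K} t(G[P_k])) · M, where G[P_k] is the subgraph of G induced by P_k, and M is the number of sets S of exactly K−1 edges of G such that every edge of S has its two endpoints in two distinct blocks of P and the graph on the K blocks, in which two blocks are adjacent whenever some edge of S joins them, is connected. -/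
/-- The number of spanning trees `τ` of `G` compatible with the partition `P`
(i.e. such that every block of `P` induces a connected subgraph of `τ`). -/
noncomputable def compatibleTreeCount {V : Type*} [Fintype V] [DecidableEq V]
    (G : SimpleGraph V) (P : Finpartition (Finset.univ : Finset V)) : ℕ :=
  Nat.card {H : SimpleGraph V // H ≤ G ∧ H.IsTree ∧
    ∀ p ∈ P.parts, (H.induce (p : Set V)).Connected}

/-- The graph on the blocks of the partition `P` in which two blocks are adjacent
whenever some edge of `S` joins them. -/
def blockGraph {V : Type*} [Fintype V] [DecidableEq V] (P : Finpartition (Finset.univ : Finset V))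
    (S : Finset (Sym2 V)) : SimpleGraph {p // p ∈ P.parts} where
  Adj p q := p ≠ q ∧ ∃ u ∈ (p : Finset V), ∃ v ∈ (q : Finset V), s(u, v) ∈ S
  symm := ⟨by
    rintro p q ⟨hpq, u, hu, v, hv, he⟩
    exact ⟨hpq.symm, v, hv, u, hu, by rwa [Sym2.eq_swap]⟩⟩
  loopless := ⟨by rintro p ⟨h, -⟩; exact h rfl⟩

set_option linter.unusedSectionVars false

open Finset SimpleGraph

namespace CSTaux


variable {V : Type*} [Fintype V] [DecidableEq V]

lemma exists_adj_dist (G : SimpleGraph V) (hc : G.Connected) {r v : V} (hvr : v ≠ r) :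
    ∃ w, G.Adj v w ∧ G.dist w r + 1 = G.dist v r := by
  obtain ⟨p, hp⟩ := (hc.preconnected v r).exists_walk_length_eq_dist
  cases p with
  | nil => exact absurd rfl hvr
  | @cons _ w _ h q =>
    refine ⟨w, h, ?_⟩
    have h1 : G.dist w r ≤ q.length := SimpleGraph.dist_le q
    have h2 : G.dist v r ≤ G.dist w r + 1 := by
      obtain ⟨q', hq'⟩ := (q.reachable).exists_walk_length_eq_dist
      have := SimpleGraph.dist_le (SimpleGraph.Walk.cons h q')
      simpa [hq'] using this
    simp only [SimpleGraph.Walk.length_cons] at hp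
    omega

lemma card_le_of_connected (G : SimpleGraph V) [Fintype G.edgeSet] (hc : G.Connected) :
    Fintype.card V ≤ G.edgeFinset.card + 1 := by
  classical
  obtain ⟨r⟩ := hc.nonempty
  have key : ∀ v : V, v ≠ r → ∃ w, G.Adj v w ∧ G.dist w r + 1 = G.dist v r :=
    fun v h => exists_adj_dist G hc h
  choose! nxt hadj hdist using key
  have hinj : Set.InjOn (fun v => s(v, nxt v)) ((univ.erase r) : Finset V) := by
    intro a ha b hb hab
    simp only [Finset.coe_erase, Set.mem_diff, Set.mem_singleton_iff] at ha hb
    simp only [Sym2.eq_iff] at hab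
    rcases hab with ⟨h1, h2⟩ | ⟨h1, h2⟩
    · exact h1
    · exfalso
      have da := hdist a ha.2
      have db := hdist b hb.2
      rw [h2] at da
      rw [← h1] at db
      omega
  have hmaps : ∀ v ∈ univ.erase r, s(v, nxt v) ∈ G.edgeFinset := by
    intro v hv
    simp only [mem_erase, mem_univ, and_true] at hv
    rw [SimpleGraph.mem_edgeFinset]
    exact hadj v hv
  have hle := Finset.card_le_card_of_injOn _ hmaps hinj
  have hcard : (univ.erase r).card = Fintype.card V - 1 := by
    rw [Finset.card_erase_of_mem (mem_univ r), Finset.card_univ]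
  have hpos : 0 < Fintype.card V := Fintype.card_pos_iff.mpr ⟨r⟩
  omega

lemma reachable_of_adj_reachable {V' : Type*} {G G' : SimpleGraph V'}
    (h : ∀ x z, G.Adj x z → G'.Reachable x z) {x y : V'} (w : G.Walk x y) :
    G'.Reachable x y := by
  induction w with
  | nil => exact .refl _
  | cons hxz q ih => exact (h _ _ hxz).trans ih

lemma isTree_of_connected_of_card (G : SimpleGraph V) [Fintype G.edgeSet] (hc : G.Connected)
    (h : G.edgeFinset.card + 1 = Fintype.card V) : G.IsTree := by
  classical
  refine ⟨hc, ?_⟩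
  intro v c hcyc
  have hne : c.edges ≠ [] := by
    have h3 := hcyc.three_le_length
    intro he
    have hl : c.edges.length = c.length := c.length_edges
    rw [he] at hl
    simp at hl
    omega
  obtain ⟨e, he⟩ := List.exists_mem_of_ne_nil _ hne
  induction e using Sym2.inductionOn with
  | _ a b =>
  obtain ⟨hadj, hreach⟩ : G.Adj a b ∧ (G \ SimpleGraph.fromEdgeSet {s(a,b)}).Reachable a b :=
    SimpleGraph.adj_and_reachable_delete_edges_iff_exists_cycle.mpr ⟨v, c, hcyc, he⟩
  set G' := G \ SimpleGraph.fromEdgeSet {s(a,b)} with hG'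
  have hconn' : G'.Connected := by
    haveI := hc.nonempty
    refine SimpleGraph.Connected.mk fun x y => ?_
    obtain ⟨w⟩ := hc.preconnected x y
    refine reachable_of_adj_reachable (fun x z hxz => ?_) w
    by_cases hcase : s(x, z) = s(a, b)
    · rw [Sym2.eq_iff] at hcase
      rcases hcase with ⟨rfl, rfl⟩ | ⟨rfl, rfl⟩
      · exact hreach
      · exact hreach.symm
    · refine SimpleGraph.Adj.reachable ?_
      rw [hG']
      simp only [SimpleGraph.sdiff_adj, SimpleGraph.fromEdgeSet_adj]
      exact ⟨hxz, fun hh => hcase hh.1⟩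
  haveI : Fintype G'.edgeSet := Set.Finite.fintype (Set.toFinite _)
  have h1 : Fintype.card V ≤ G'.edgeFinset.card + 1 := card_le_of_connected G' hconn'
  have h2 : G'.edgeFinset ⊆ G.edgeFinset.erase s(a,b) := by
    intro e' he'
    rw [SimpleGraph.mem_edgeFinset] at he'
    rw [hG'] at he'
    simp only [SimpleGraph.edgeSet_sdiff, SimpleGraph.edgeSet_fromEdgeSet,
      SimpleGraph.edgeSet_sdiff_sdiff_isDiag, Set.mem_diff, Set.mem_singleton_iff] at he'
    rw [Finset.mem_erase, SimpleGraph.mem_edgeFinset]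
    exact ⟨he'.2, he'.1⟩
  have h3 := Finset.card_le_card h2
  have h4 : (G.edgeFinset.erase s(a,b)).card = G.edgeFinset.card - 1 :=
    Finset.card_erase_of_mem (by rw [SimpleGraph.mem_edgeFinset]; exact hadj)
  have h5 : 0 < G.edgeFinset.card :=
    Finset.card_pos.mpr ⟨s(a,b), by rw [SimpleGraph.mem_edgeFinset]; exact hadj⟩
  omega


section Defs

variable (P : Finpartition (Finset.univ : Finset V))

/-- An edge is internal if both endpoints lie in a common part. -/
def Internal (e : Sym2 V) : Prop := ∃ p ∈ P.parts, ∀ v ∈ e, v ∈ p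

/-- The cross (non-internal) edges of a graph `H`. -/
noncomputable def cross (H : SimpleGraph V) : Finset (Sym2 V) :=
  (Set.toFinite {e | e ∈ H.edgeSet ∧ ¬ Internal P e}).toFinset

@[simp] lemma mem_cross {H : SimpleGraph V} {e : Sym2 V} :
    e ∈ cross P H ↔ e ∈ H.edgeSet ∧ ¬ Internal P e := Set.Finite.mem_toFinset _

/-- The internal edges of `H` inside a given part `p`. -/
noncomputable def innerE (p : Finset V) (H : SimpleGraph V) : Finset (Sym2 V) :=
  (Set.toFinite {e | e ∈ H.edgeSet ∧ ∀ v ∈ e, v ∈ p}).toFinset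

@[simp] lemma mem_innerE {p : Finset V} {H : SimpleGraph V} {e : Sym2 V} :
    e ∈ innerE p H ↔ e ∈ H.edgeSet ∧ ∀ v ∈ e, v ∈ p := Set.Finite.mem_toFinset _

lemma part_mem' (u : V) : P.part u ∈ P.parts := P.part_mem.2 (mem_univ u)
lemma mem_part' (u : V) : u ∈ P.part u := P.mem_part (mem_univ u)

end Defs

variable {P : Finpartition (Finset.univ : Finset V)}

lemma innerE_card (p : Finset V) (H : SimpleGraph V) [Fintype (H.induce (p : Set V)).edgeSet] :
    (innerE p H).card = (H.induce (p : Set V)).edgeFinset.card := by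
  classical
  rw [eq_comm, ← Finset.card_image_of_injective _ (Sym2.map.injective Subtype.val_injective)]
  congr 1
  ext e
  simp only [Finset.mem_image, SimpleGraph.mem_edgeFinset, mem_innerE]
  constructor
  · rintro ⟨e', he', rfl⟩
    induction e' using Sym2.inductionOn with
    | _ x y =>
      rw [SimpleGraph.mem_edgeSet] at he'
      simp only [SimpleGraph.comap_adj, Function.Embedding.coe_subtype] at he'
      refine ⟨by rwa [Sym2.map_pair_eq, SimpleGraph.mem_edgeSet], ?_⟩
      intro v hv
      rw [Sym2.map_pair_eq, Sym2.mem_iff] at hv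
      rcases hv with rfl | rfl
      · exact x.2
      · exact y.2
  · rintro ⟨he, hall⟩
    induction e using Sym2.inductionOn with
    | _ x y =>
      rw [SimpleGraph.mem_edgeSet] at he
      have hx : x ∈ (p : Set V) := hall x (Sym2.mem_mk_left x y)
      have hy : y ∈ (p : Set V) := hall y (Sym2.mem_mk_right x y)
      exact ⟨s(⟨x, hx⟩, ⟨y, hy⟩), by
        rw [SimpleGraph.mem_edgeSet]
        simpa using he, by rw [Sym2.map_pair_eq]⟩

/-- decomposition of the edges of any graph into internal and cross edges -/
lemma edge_decomp (H : SimpleGraph V) [Fintype H.edgeSet] :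
    H.edgeFinset.card = (∑ p ∈ P.parts, (innerE p H).card) + (cross P H).card := by
  classical
  have hdisj : ∀ p ∈ P.parts, ∀ q ∈ P.parts, p ≠ q → Disjoint (innerE p H) (innerE q H) := by
    intro p hp q hq hpq
    rw [Finset.disjoint_left]
    intro e hep heq
    rw [mem_innerE] at hep heq
    obtain ⟨x, y⟩ := e
    have hx : x ∈ p := hep.2 x (Sym2.mem_mk_left x y)
    have hx' : x ∈ q := heq.2 x (Sym2.mem_mk_left x y)
    exact hpq (P.eq_of_mem_parts hp hq hx hx')
  have hunion : H.edgeFinset = (P.parts.biUnion fun p => innerE p H) ∪ cross P H := by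
    ext e
    simp only [Finset.mem_union, Finset.mem_biUnion, mem_innerE, mem_cross,
      SimpleGraph.mem_edgeFinset]
    constructor
    · intro he
      by_cases hi : Internal P e
      · obtain ⟨p, hp, hall⟩ := hi
        exact Or.inl ⟨p, hp, he, hall⟩
      · exact Or.inr ⟨he, hi⟩
    · rintro (⟨p, hp, he, -⟩ | ⟨he, -⟩) <;> exact he
  have hdisj2 : Disjoint (P.parts.biUnion fun p => innerE p H) (cross P H) := by
    rw [Finset.disjoint_left]
    intro e he hec
    rw [Finset.mem_biUnion] at he
    obtain ⟨p, hp, hep⟩ := he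
    rw [mem_innerE] at hep
    rw [mem_cross] at hec
    exact hec.2 ⟨p, hp, hep.2⟩
  rw [hunion, Finset.card_union_of_disjoint hdisj2, Finset.card_biUnion hdisj]



lemma induce_le {H G : SimpleGraph V} (h : H ≤ G) (s : Set V) : H.induce s ≤ G.induce s := by
  intro a b hab
  simp only [SimpleGraph.comap_adj, Function.Embedding.coe_subtype] at hab ⊢
  exact h hab

lemma induce_acyclic {H : SimpleGraph V} (h : H.IsAcyclic) (s : Set V) :
    (H.induce s).IsAcyclic := by
  intro v c hc
  exact h ((c.map (SimpleGraph.Embedding.induce (G := H) s).toHom))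
    (hc.map (SimpleGraph.Embedding.induce (G := H) s).injective)

lemma induce_isTree {H : SimpleGraph V} (h : H.IsTree) (s : Set V)
    (hconn : (H.induce s).Connected) : (H.induce s).IsTree :=
  ⟨hconn, induce_acyclic h.IsAcyclic s⟩


section Forward

variable {G H : SimpleGraph V}

lemma cross_subset (hHG : H ≤ G) [Fintype G.edgeSet] : cross P H ⊆ G.edgeFinset := by
  intro e he
  rw [mem_cross] at he
  rw [SimpleGraph.mem_edgeFinset]
  exact SimpleGraph.edgeSet_mono hHG he.1

lemma cross_spec {e : Sym2 V} (he : e ∈ cross P H) :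
    ∃ u v, e = s(u, v) ∧ ∃ p ∈ P.parts, ∃ q ∈ P.parts, p ≠ q ∧ u ∈ p ∧ v ∈ q := by
  rw [mem_cross] at he
  obtain ⟨u, v⟩ := e
  refine ⟨u, v, rfl, P.part u, part_mem' P u, P.part v, part_mem' P v, ?_,
    mem_part' P u, mem_part' P v⟩
  intro hpq
  refine he.2 ⟨P.part u, part_mem' P u, ?_⟩
  intro w hw
  rw [Sym2.mem_iff] at hw
  rcases hw with rfl | rfl
  · exact mem_part' P w
  · rw [hpq]; exact mem_part' P w

lemma block_reach {u v : V} (w : H.Walk u v) :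
    (blockGraph P (cross P H)).Reachable ⟨P.part u, part_mem' P u⟩ ⟨P.part v, part_mem' P v⟩ := by
  induction w with
  | nil => exact .refl _
  | @cons x z y hxz q ih =>
    refine SimpleGraph.Reachable.trans ?_ ih
    by_cases hcase : P.part x = P.part z
    · have hh : (⟨P.part x, part_mem' P x⟩ : {p // p ∈ P.parts}) = ⟨P.part z, part_mem' P z⟩ :=
        Subtype.ext hcase
      rw [hh]
    · refine SimpleGraph.Adj.reachable ?_
      refine ⟨fun hh => hcase (congrArg Subtype.val hh), x, mem_part' P x, z, mem_part' P z, ?_⟩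
      rw [mem_cross]
      refine ⟨hxz, ?_⟩
      rintro ⟨p, hp, hall⟩
      refine hcase ?_
      rw [P.part_eq_of_mem hp (hall x (Sym2.mem_mk_left x z)),
        P.part_eq_of_mem hp (hall z (Sym2.mem_mk_right x z))]

lemma block_conn (htree : H.IsTree) : (blockGraph P (cross P H)).Connected := by
  haveI : Nonempty {p // p ∈ P.parts} := by
    obtain ⟨v⟩ := htree.isConnected.nonempty
    exact ⟨⟨P.part v, part_mem' P v⟩⟩
  refine SimpleGraph.Connected.mk ?_
  rintro ⟨p, hp⟩ ⟨q, hq⟩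
  obtain ⟨u, hu⟩ := P.nonempty_of_mem_parts hp
  obtain ⟨v, hv⟩ := P.nonempty_of_mem_parts hq
  obtain ⟨w⟩ := htree.isConnected.preconnected u v
  have hr := block_reach (P := P) w
  have e1 : (⟨p, hp⟩ : {x // x ∈ P.parts}) = ⟨P.part u, part_mem' P u⟩ :=
    Subtype.ext (P.part_eq_of_mem hp hu).symm
  have e2 : (⟨q, hq⟩ : {x // x ∈ P.parts}) = ⟨P.part v, part_mem' P v⟩ :=
    Subtype.ext (P.part_eq_of_mem hq hv).symm
  rw [e1, e2]
  exact hr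

lemma card_coe_set (p : Finset V) : Fintype.card ((p : Finset V) : Set V) = p.card := by
  simp

lemma cross_card [Fintype H.edgeSet] (htree : H.IsTree)
    (hcompat : ∀ p ∈ P.parts, (H.induce (p : Set V)).Connected) :
    (cross P H).card = P.parts.card - 1 := by
  classical
  have hdecomp := edge_decomp (P := P) H
  have htreecard := htree.card_edgeFinset
  have hpart : ∀ p ∈ P.parts, (innerE p H).card + 1 = p.card := by
    intro p hp
    rw [innerE_card]
    have ht : (H.induce (p : Set V)).IsTree := induce_isTree htree _ (hcompat p hp)
    have hc := ht.card_edgeFinset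
    rwa [card_coe_set] at hc
  have hsum : (∑ p ∈ P.parts, (innerE p H).card) + P.parts.card = Fintype.card V := by
    have : ∑ p ∈ P.parts, ((innerE p H).card + 1) = ∑ p ∈ P.parts, p.card :=
      Finset.sum_congr rfl hpart
    rw [Finset.sum_add_distrib, Finset.sum_const, smul_eq_mul, mul_one] at this
    rw [this, P.sum_card_parts, Finset.card_univ]
  omega

end Forward

section Backward

variable (P) in
/-- Glue together trees on the parts with a set of cross edges. -/
def glue (T : ∀ p : {x // x ∈ P.parts}, SimpleGraph (((p : Finset V) : Set V)))
    (S : Finset (Sym2 V)) : SimpleGraph V where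
  Adj u v := u ≠ v ∧ ((∃ (p : {x // x ∈ P.parts}) (hu : u ∈ ((p : Finset V) : Set V))
      (hv : v ∈ ((p : Finset V) : Set V)), (T p).Adj ⟨u, hu⟩ ⟨v, hv⟩) ∨ s(u, v) ∈ S)
  symm := ⟨by
    rintro u v ⟨hne, h⟩
    refine ⟨hne.symm, ?_⟩
    rcases h with ⟨p, hu, hv, h⟩ | h
    · exact Or.inl ⟨p, hv, hu, h.symm⟩
    · exact Or.inr (by rwa [Sym2.eq_swap])⟩
  loopless := ⟨fun u => by rintro ⟨hne, -⟩; exact hne rfl⟩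

variable {G : SimpleGraph V}
variable {T : ∀ p : {x // x ∈ P.parts}, SimpleGraph (((p : Finset V) : Set V))}
variable {S : Finset (Sym2 V)}

lemma glue_le [Fintype G.edgeSet]
    (hT : ∀ p, T p ≤ G.induce (((p : Finset V) : Set V)))
    (hS1 : S ⊆ G.edgeFinset) : glue P T S ≤ G := by
  rintro u v ⟨hne, h⟩
  rcases h with ⟨p, hu, hv, h⟩ | h
  · have := hT p h
    simpa using this
  · rw [← SimpleGraph.mem_edgeSet]
    have := hS1 h
    rwa [SimpleGraph.mem_edgeFinset] at this

lemma S_not_internal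
    (hS3 : ∀ e ∈ S, ∃ u v, e = s(u, v) ∧ ∃ p ∈ P.parts, ∃ q ∈ P.parts, p ≠ q ∧ u ∈ p ∧ v ∈ q)
    {e : Sym2 V} (he : e ∈ S) : ¬ Internal P e := by
  obtain ⟨u, v, rfl, p, hp, q, hq, hpq, hu, hv⟩ := hS3 e he
  rintro ⟨t, ht, hall⟩
  have h1 : t = p := P.eq_of_mem_parts ht hp (hall u (Sym2.mem_mk_left u v)) hu
  have h2 : t = q := P.eq_of_mem_parts ht hq (hall v (Sym2.mem_mk_right u v)) hv
  exact hpq (h1 ▸ h2)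

lemma glue_induce
    (hS3 : ∀ e ∈ S, ∃ u v, e = s(u, v) ∧ ∃ p ∈ P.parts, ∃ q ∈ P.parts, p ≠ q ∧ u ∈ p ∧ v ∈ q)
    (p : Finset V) (hp : p ∈ P.parts) :
    (glue P T S).induce ((p : Finset V) : Set V) = T ⟨p, hp⟩ := by
  ext ⟨u, hu⟩ ⟨v, hv⟩
  simp only [SimpleGraph.comap_adj, Function.Embedding.coe_subtype]
  constructor
  · rintro ⟨hne, ⟨q, hqu, hqv, h⟩ | h⟩
    · have hq : q = ⟨p, hp⟩ := Subtype.ext (P.eq_of_mem_parts q.2 hp hqu hu)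
      subst hq
      exact h
    · exfalso
      obtain ⟨a, b, hab, q, hq, r, hr, hqr, ha, hb⟩ := hS3 _ h
      rw [Sym2.eq_iff] at hab
      rcases hab with ⟨rfl, rfl⟩ | ⟨rfl, rfl⟩
      · exact hqr ((P.eq_of_mem_parts hq hp ha hu).trans (P.eq_of_mem_parts hr hp hb hv).symm)
      · exact hqr ((P.eq_of_mem_parts hq hp ha hv).trans (P.eq_of_mem_parts hr hp hb hu).symm)
  · intro h
    have hne : u ≠ v := by
      rintro rfl
      exact (T ⟨p, hp⟩).loopless.irrefl _ h
    exact ⟨hne, Or.inl ⟨⟨p, hp⟩, hu, hv, h⟩⟩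

lemma glue_cross
    (hS3 : ∀ e ∈ S, ∃ u v, e = s(u, v) ∧ ∃ p ∈ P.parts, ∃ q ∈ P.parts, p ≠ q ∧ u ∈ p ∧ v ∈ q) :
    cross P (glue P T S) = S := by
  ext e
  rw [mem_cross]
  constructor
  · rintro ⟨he, hni⟩
    obtain ⟨u, v⟩ := e
    rw [SimpleGraph.mem_edgeSet] at he
    obtain ⟨hne, ⟨q, hqu, hqv, h⟩ | h⟩ := he
    · refine absurd ⟨q.1, q.2, ?_⟩ hni
      intro w hw
      rw [Sym2.mem_iff] at hw
      rcases hw with rfl | rfl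
      · exact hqu
      · exact hqv
    · exact h
  · intro he
    have hni := S_not_internal hS3 he
    obtain ⟨u, v, rfl, q, hq, r, hr, hqr, hu, hv⟩ := hS3 _ he
    have hne : u ≠ v := by
      rintro rfl
      exact hqr (P.eq_of_mem_parts hq hr hu hv)
    exact ⟨⟨hne, Or.inr he⟩, hni⟩

/-- Inclusion homomorphism from a part tree into the glued graph. -/
def toGlueHom (T : ∀ p : {x // x ∈ P.parts}, SimpleGraph (((p : Finset V) : Set V)))
    (S : Finset (Sym2 V)) (p : {x // x ∈ P.parts}) : T p →g glue P T S where
  toFun := Subtype.val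
  map_rel' := fun {a b} h => ⟨fun he => h.ne (Subtype.ext he), Or.inl ⟨p, a.2, b.2, h⟩⟩

lemma glue_within (hT : ∀ p, (T p).IsTree) (p : {x // x ∈ P.parts}) {u v : V}
    (hu : u ∈ (p : Finset V)) (hv : v ∈ (p : Finset V)) :
    (glue P T S).Reachable u v := by
  have hr : (T p).Reachable ⟨u, hu⟩ ⟨v, hv⟩ := (hT p).isConnected.preconnected _ _
  exact hr.map (toGlueHom T S p)

lemma glue_reach_of_blockwalk (hT : ∀ p, (T p).IsTree)
    {b1 b2 : {x // x ∈ P.parts}} (w : (blockGraph P S).Walk b1 b2) :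
    ∀ {u v : V}, u ∈ (b1 : Finset V) → v ∈ (b2 : Finset V) → (glue P T S).Reachable u v := by
  induction w with
  | nil =>
    intro u v hu hv
    exact glue_within hT _ hu hv
  | @cons x z y hxz q ih =>
    intro u v hu hv
    obtain ⟨hne', a, ha, c, hc, hS⟩ := hxz
    have h1 : (glue P T S).Reachable u a := glue_within hT _ hu ha
    have h2 : (glue P T S).Adj a c := by
      refine ⟨?_, Or.inr hS⟩
      rintro rfl
      exact hne' (Subtype.ext (P.eq_of_mem_parts x.2 z.2 ha hc))
    exact (h1.trans h2.reachable).trans (ih hc hv)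

lemma glue_connected (hT : ∀ p, (T p).IsTree) (hS4 : (blockGraph P S).Connected) :
    (glue P T S).Connected := by
  haveI hne : Nonempty {p // p ∈ P.parts} := hS4.nonempty
  haveI : Nonempty V := by
    obtain ⟨⟨p, hp⟩⟩ := hne
    obtain ⟨u, hu⟩ := P.nonempty_of_mem_parts hp
    exact ⟨u⟩
  refine SimpleGraph.Connected.mk fun u v => ?_
  obtain ⟨w⟩ := hS4.preconnected ⟨P.part u, part_mem' P u⟩ ⟨P.part v, part_mem' P v⟩
  exact glue_reach_of_blockwalk hT w (mem_part' P u) (mem_part' P v)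

lemma sum_innerE {H : SimpleGraph V} (hpart : ∀ p ∈ P.parts, (innerE p H).card + 1 = p.card) :
    (∑ p ∈ P.parts, (innerE p H).card) + P.parts.card = Fintype.card V := by
  have h : ∑ p ∈ P.parts, ((innerE p H).card + 1) = ∑ p ∈ P.parts, p.card :=
    Finset.sum_congr rfl hpart
  rw [Finset.sum_add_distrib, Finset.sum_const, smul_eq_mul, mul_one] at h
  rw [h, P.sum_card_parts, Finset.card_univ]

lemma edgeFinset_card_congr {W : Type*} {G₁ G₂ : SimpleGraph W} [Fintype G₁.edgeSet]
    [Fintype G₂.edgeSet] (h : G₁ = G₂) : G₁.edgeFinset.card = G₂.edgeFinset.card := by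
  have he : G₁.edgeFinset = G₂.edgeFinset := Set.toFinset_congr (by rw [h])
  rw [he]

lemma glue_card [Fintype (glue P T S).edgeSet] (hT : ∀ p, (T p).IsTree)
    (hS2 : S.card = P.parts.card - 1)
    (hS3 : ∀ e ∈ S, ∃ u v, e = s(u, v) ∧ ∃ p ∈ P.parts, ∃ q ∈ P.parts, p ≠ q ∧ u ∈ p ∧ v ∈ q)
    (hS4 : (blockGraph P S).Connected) :
    (glue P T S).edgeFinset.card + 1 = Fintype.card V := by
  classical
  have hdecomp := edge_decomp (P := P) (glue P T S)
  have hpart : ∀ p ∈ P.parts, (innerE p (glue P T S)).card + 1 = p.card := by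
    intro p hp
    rw [innerE_card, edgeFinset_card_congr (glue_induce hS3 p hp)]
    have hc := (hT ⟨p, hp⟩).card_edgeFinset
    rwa [card_coe_set] at hc
  have hsum := sum_innerE hpart
  have hcross : (cross P (glue P T S)).card = P.parts.card - 1 := by
    rw [glue_cross hS3, hS2]
  have hK : 1 ≤ P.parts.card := by
    obtain ⟨⟨p, hp⟩⟩ := hS4.nonempty
    exact Finset.card_pos.mpr ⟨p, hp⟩
  omega

lemma glue_isTree [Fintype (glue P T S).edgeSet] (hT : ∀ p, (T p).IsTree)
    (hS2 : S.card = P.parts.card - 1)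
    (hS3 : ∀ e ∈ S, ∃ u v, e = s(u, v) ∧ ∃ p ∈ P.parts, ∃ q ∈ P.parts, p ≠ q ∧ u ∈ p ∧ v ∈ q)
    (hS4 : (blockGraph P S).Connected) :
    (glue P T S).IsTree :=
  isTree_of_connected_of_card _ (glue_connected hT hS4) (glue_card hT hS2 hS3 hS4)

lemma glue_eq {H : SimpleGraph V} :
    glue P (fun p => H.induce (((p : Finset V) : Set V))) (cross P H) = H := by
  ext u v
  constructor
  · rintro ⟨hne, ⟨p, hu, hv, h⟩ | h⟩
    · exact h
    · rw [mem_cross] at h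
      exact h.1
  · intro h
    refine ⟨h.ne, ?_⟩
    by_cases hi : Internal P s(u, v)
    · obtain ⟨p, hp, hall⟩ := hi
      exact Or.inl ⟨⟨p, hp⟩, hall u (Sym2.mem_mk_left u v), hall v (Sym2.mem_mk_right u v), h⟩
    · refine Or.inr ?_
      rw [mem_cross]
      exact ⟨h, hi⟩

end Backward

section Main

variable (G : SimpleGraph V) [DecidableRel G.Adj] (P : Finpartition (Finset.univ : Finset V))

noncomputable def mainEquiv :
    {H : SimpleGraph V // H ≤ G ∧ H.IsTree ∧ ∀ p ∈ P.parts, (H.induce (p : Set V)).Connected} ≃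
    (∀ p : {x // x ∈ P.parts},
        {T : SimpleGraph (((p : Finset V) : Set V)) //
          T ≤ G.induce (((p : Finset V) : Set V)) ∧ T.IsTree}) ×
      {S : Finset (Sym2 V) // S ⊆ G.edgeFinset ∧ S.card = P.parts.card - 1 ∧
        (∀ e ∈ S, ∃ u v, e = s(u, v) ∧ ∃ p ∈ P.parts, ∃ q ∈ P.parts, p ≠ q ∧ u ∈ p ∧ v ∈ q) ∧
        (blockGraph P S).Connected} := by
  classical
  exact {
    toFun := fun H =>
      (fun p => ⟨H.1.induce _, induce_le H.2.1 _, induce_isTree H.2.2.1 _ (H.2.2.2 _ p.2)⟩,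
       ⟨cross P H.1, cross_subset H.2.1, cross_card H.2.2.1 H.2.2.2,
        fun e he => cross_spec he, block_conn H.2.2.1⟩)
    invFun := fun TS =>
      ⟨glue P (fun p => (TS.1 p).1) TS.2.1,
        glue_le (fun p => (TS.1 p).2.1) TS.2.2.1,
        glue_isTree (fun p => (TS.1 p).2.2) TS.2.2.2.1 TS.2.2.2.2.1 TS.2.2.2.2.2,
        fun p hp => by
          rw [glue_induce TS.2.2.2.2.1 p hp]
          exact (TS.1 ⟨p, hp⟩).2.2.isConnected⟩
    left_inv := fun H => Subtype.ext glue_eq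
    right_inv := fun TS => by
      refine Prod.ext ?_ ?_
      · funext p
        exact Subtype.ext (glue_induce TS.2.2.2.2.1 p.1 p.2)
      · exact Subtype.ext (glue_cross TS.2.2.2.2.1) }

end Main

end CSTaux

/-- **Compatible spanning trees (product decomposition).**  For a partition
`P = {P₁, …, P_K}` of the vertices of `G` into `K` nonempty blocks, the number of spanning
trees `τ` of `G` with `P ≺ τ` equals the product of the spanning-tree counts of the induced
subgraphs `G[P_k]`, times the number of sets `S` of exactly `K−1` edges of `G` whose edges
all join two distinct blocks and which connect the graph on the `K` blocks. -/
theorem compatible_spanning_trees_product {V : Type*} [Fintype V] [DecidableEq V]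
    (G : SimpleGraph V) [DecidableRel G.Adj]
    (P : Finpartition (Finset.univ : Finset V)) {K : ℕ} (hK : P.parts.card = K) :
    compatibleTreeCount G P =
      (∏ p ∈ P.parts, spanningTreeCount (G.induce (p : Set V))) *
        Nat.card {S : Finset (Sym2 V) //
          S ⊆ G.edgeFinset ∧ S.card = K - 1 ∧
          (∀ e ∈ S, ∃ u v, e = s(u, v) ∧
            ∃ p ∈ P.parts, ∃ q ∈ P.parts, p ≠ q ∧ u ∈ p ∧ v ∈ q) ∧
          (blockGraph P S).Connected} := by
  subst hK
  classical
  have h1 : compatibleTreeCount G P = _ := Nat.card_congr (CSTaux.mainEquiv G P)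
  rw [h1, Nat.card_prod]
  congr 1
  rw [Nat.card_pi]
  rw [← Finset.prod_coe_sort P.parts (fun p => spanningTreeCount (G.induce (p : Set V)))]
  rfl
end

section
/- Merge-score bound for compatible spanning-tree counts: Let G be a finite simple graph on vertex set V, let P = {P_1, …, P_K} be a partition of V with K ≥ 3 blocks, and let g ≠ h index two blocks with cut(G, P_g, P_h) nonempty. Let P^{g∪h} denote the partition obtained from P by replacing the blocks P_g and P_h by their union P_g ∪ P_h. Writing N(Q) for the number of spanning trees τ of G with Q ≺ τ, the following inequality holds: |cut(G, P_g, P_h)| · N(P^{g∪h}) · t(G[P_g]) · t(G[P_h]) ≤ N(P) · t(G[P_g ∪ P_h]). -/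
namespace MsbAux

open Function Set SimpleGraph

variable {V : Type*}

lemma reach_of_walk {G H : SimpleGraph V}
    (h : ∀ a b, G.Adj a b → H.Reachable a b) {x y : V} (p : G.Walk x y) : H.Reachable x y := by
  induction p with
  | nil => exact Reachable.refl _
  | cons ha _ ih => exact (h _ _ ha).trans ih

lemma acyclic_induce {G : SimpleGraph V} (h : G.IsAcyclic) (S : Set V) :
    (G.induce S).IsAcyclic := by
  intro v c hc
  exact h _ (hc.map (f := (SimpleGraph.Embedding.induce (G := G) S).toHom) Subtype.val_injective)

lemma sym2_forall_mem {x y : V} {S : Set V} : (∀ z ∈ s(x, y), z ∈ S) ↔ x ∈ S ∧ y ∈ S := by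
  constructor
  · intro h; exact ⟨h x (by simp), h y (by simp)⟩
  · rintro ⟨h1, h2⟩ z hz
    rcases Sym2.mem_iff.mp hz with rfl | rfl <;> assumption

lemma tree_ncard [Fintype V] {G : SimpleGraph V} (h : G.IsTree) :
    G.edgeSet.ncard + 1 = Fintype.card V := by
  classical
  rw [Set.ncard_eq_toFinset_card']
  exact h.card_edgeFinset

lemma tree_ncard' {W : Type*} [Finite W] {G : SimpleGraph W} (h : G.IsTree) :
    G.edgeSet.ncard + 1 = Nat.card W := by
  classical
  cases nonempty_fintype W
  rw [Nat.card_eq_fintype_card]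
  exact tree_ncard h

lemma exists_tree [Fintype V] (G : SimpleGraph V) (hG : G.Connected) :
    ∃ T, T ≤ G ∧ T.IsTree := by
  classical
  obtain ⟨n, hn⟩ : ∃ n, G.edgeSet.ncard = n := ⟨_, rfl⟩
  induction n using Nat.strong_induction_on generalizing G with
  | _ n ih =>
    by_cases hac : G.IsAcyclic
    · exact ⟨G, le_rfl, ⟨hG, hac⟩⟩
    · rw [IsAcyclic] at hac
      push_neg at hac
      obtain ⟨v, c, hc⟩ := hac
      cases c with
      | nil => exact absurd rfl hc.ne_nil
      | @cons _ w _ hadj p =>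
        set G' := G \ fromEdgeSet {s(v, w)} with hG'def
        have hG'le : G' ≤ G := sdiff_le
        have hmemG : s(v, w) ∈ G.edgeSet := hadj
        have hnotG' : s(v, w) ∉ G'.edgeSet := by
          simp only [mem_edgeSet, hG'def, sdiff_adj, fromEdgeSet_adj]
          intro hcon
          exact hcon.2 ⟨rfl, hadj.ne⟩
        have hss : G'.edgeSet ⊂ G.edgeSet :=
          (edgeSet_mono hG'le).ssubset_of_ne (fun h => hnotG' (h ▸ hmemG))
        have hreach : ∀ a b, G.Adj a b → G'.Reachable a b := by
          intro a b hab
          by_cases h : s(a, b) = s(v, w)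
          · have hr : G'.Reachable v w :=
              (adj_and_reachable_delete_edges_iff_exists_cycle.mpr
                ⟨v, Walk.cons hadj p, hc, by simp⟩).2
            rw [Sym2.eq_iff] at h
            rcases h with ⟨rfl, rfl⟩ | ⟨rfl, rfl⟩
            · exact hr
            · exact hr.symm
          · refine Adj.reachable ?_
            rw [hG'def, sdiff_adj, fromEdgeSet_adj]
            exact ⟨hab, fun hcon => h hcon.1⟩
        have hG' : G'.Connected := by
          rw [connected_iff]
          refine ⟨fun a b => ?_, hG.nonempty⟩
          obtain ⟨q⟩ := hG.preconnected a b
          exact reach_of_walk hreach q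
        obtain ⟨T, hT1, hT2⟩ := ih G'.edgeSet.ncard
          (hn ▸ Set.ncard_lt_ncard hss (Set.toFinite _)) G' hG' rfl
        exact ⟨T, hT1.trans hG'le, hT2⟩

lemma isTree_of_card [Fintype V] {G : SimpleGraph V} (hG : G.Connected)
    (hcard : G.edgeSet.ncard + 1 ≤ Fintype.card V) : G.IsTree := by
  obtain ⟨T, hTG, hT⟩ := exists_tree G hG
  have h1 := tree_ncard hT
  have hsub : T.edgeSet ⊆ G.edgeSet := edgeSet_mono hTG
  have hle : G.edgeSet.ncard ≤ T.edgeSet.ncard := by omega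
  have heq : T.edgeSet = G.edgeSet :=
    Set.eq_of_subset_of_ncard_le hsub hle (Set.toFinite _)
  rwa [edgeSet_inj.mp heq] at hT

lemma edgeSet_map' {W : Type*} (f : V ↪ W) (H : SimpleGraph V) :
    (H.map f).edgeSet = Sym2.map f '' H.edgeSet := by
  ext e
  induction e with
  | _ x y =>
    simp only [mem_edgeSet, map_adj, Set.mem_image]
    constructor
    · rintro ⟨a, b, hab, rfl, rfl⟩
      exact ⟨s(a, b), hab, rfl⟩
    · rintro ⟨e', he', hmap⟩
      revert he' hmap
      refine Sym2.ind (fun a b he' hmap => ?_) e'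
      rw [Sym2.map_pair_eq, Sym2.eq_iff] at hmap
      rcases hmap with ⟨rfl, rfl⟩ | ⟨rfl, rfl⟩
      · exact ⟨a, b, he', rfl, rfl⟩
      · exact ⟨b, a, he'.symm, rfl, rfl⟩

lemma induce_edgeSet (G : SimpleGraph V) (S : Set V) :
    Sym2.map (Subtype.val : S → V) '' (G.induce S).edgeSet
      = {e | e ∈ G.edgeSet ∧ ∀ v ∈ e, v ∈ S} := by
  ext e
  simp only [Set.mem_image, Set.mem_setOf_eq]
  constructor
  · rintro ⟨e', he', rfl⟩
    revert he'
    refine Sym2.ind (fun a b he' => ?_) e'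
    have hadj : G.Adj ↑a ↑b := he'
    refine ⟨hadj, ?_⟩
    intro x hx
    rw [Sym2.map_pair_eq] at hx
    rcases Sym2.mem_iff.mp hx with rfl | rfl
    · exact a.2
    · exact b.2
  · intro h
    revert h
    refine Sym2.ind (fun a b h => ?_) e
    obtain ⟨he, hmem⟩ := h
    have ha : a ∈ S := hmem a (by simp)
    have hb : b ∈ S := hmem b (by simp)
    refine ⟨s(⟨a, ha⟩, ⟨b, hb⟩), ?_, by simp [Sym2.map_pair_eq]⟩
    exact he

lemma ncard_induce (G : SimpleGraph V) (S : Set V) :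
    (G.induce S).edgeSet.ncard = {e | e ∈ G.edgeSet ∧ ∀ v ∈ e, v ∈ S}.ncard := by
  rw [← induce_edgeSet,
    Set.ncard_image_of_injective _ (Sym2.map.injective Subtype.val_injective)]

lemma edge_split [Fintype V] (G : SimpleGraph V) (S : Set V) :
    G.edgeSet.ncard = {e | e ∈ G.edgeSet ∧ ∀ v ∈ e, v ∈ S}.ncard +
      {e | e ∈ G.edgeSet ∧ ¬∀ v ∈ e, v ∈ S}.ncard := by
  classical
  rw [← Set.ncard_union_eq ?_ (Set.toFinite _) (Set.toFinite _)]
  · congr 1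
    ext e
    simp only [Set.mem_union, Set.mem_setOf_eq]
    constructor
    · intro hG
      by_cases h : ∀ v ∈ e, v ∈ S
      · exact Or.inl ⟨hG, h⟩
      · exact Or.inr ⟨hG, h⟩
    · rintro (⟨hG, _⟩ | ⟨hG, _⟩) <;> exact hG
  · rw [Set.disjoint_left]
    rintro e ⟨_, h⟩ ⟨_, h'⟩
    exact h' h

/-- Replace the part of `τ` inside `S` by `ρ`. -/
def replaceG (τ : SimpleGraph V) (S : Set V) (ρ : SimpleGraph V) : SimpleGraph V where
  Adj x y := (τ.Adj x y ∧ ¬(x ∈ S ∧ y ∈ S)) ∨ ρ.Adj x y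
  symm := by
    constructor
    intro x y h
    rcases h with ⟨h1, h2⟩ | h
    · exact Or.inl ⟨h1.symm, fun hc => h2 ⟨hc.2, hc.1⟩⟩
    · exact Or.inr h.symm
  loopless := by
    constructor
    intro x h
    rcases h with ⟨h1, _⟩ | h
    · exact τ.loopless.irrefl x h1
    · exact ρ.loopless.irrefl x h

lemma replaceG_adj {τ ρ : SimpleGraph V} {S : Set V} {x y : V} :
    (replaceG τ S ρ).Adj x y ↔ (τ.Adj x y ∧ ¬(x ∈ S ∧ y ∈ S)) ∨ ρ.Adj x y := Iff.rfl

/-- The union of two trees (on `A`, `B`) together with one crossing edge `e`. -/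
def rhoG (A B : Finset V) (e : Sym2 V) (tA : SimpleGraph ↥(A : Set V))
    (tB : SimpleGraph ↥(B : Set V)) : SimpleGraph V :=
  tA.map (Function.Embedding.subtype _) ⊔ tB.map (Function.Embedding.subtype _) ⊔
    fromEdgeSet {e}

lemma rhoG_adj {A B : Finset V} {e : Sym2 V} {tA : SimpleGraph ↥(A : Set V)}
    {tB : SimpleGraph ↥(B : Set V)} {x y : V} :
    (rhoG A B e tA tB).Adj x y ↔
      (∃ a b, tA.Adj a b ∧ ↑a = x ∧ ↑b = y) ∨ (∃ a b, tB.Adj a b ∧ ↑a = x ∧ ↑b = y) ∨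
        (s(x, y) = e ∧ x ≠ y) := by
  simp only [rhoG, sup_adj, SimpleGraph.map_adj]
  simp only [rhoG, sup_adj, SimpleGraph.map_adj, fromEdgeSet_adj, Set.mem_singleton_iff,
    Relation.Map, Function.Embedding.coe_subtype, or_assoc]

section Rho

variable {G : SimpleGraph V} {A B : Finset V} {e : Sym2 V} {u v : V}
  {tA : SimpleGraph ↥(A : Set V)} {tB : SimpleGraph ↥(B : Set V)}

lemma mem_image_map_val {S : Set V} {H : SimpleGraph ↥S} {f : Sym2 V}
    (hf : f ∈ Sym2.map (Subtype.val : S → V) '' H.edgeSet) : ∀ x ∈ f, x ∈ S := by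
  obtain ⟨e', _, rfl⟩ := hf
  revert e'
  refine fun e' => Sym2.ind (fun a b _ x hx => ?_) e'
  rw [Sym2.map_pair_eq] at hx
  rcases Sym2.mem_iff.mp hx with rfl | rfl
  · exact a.2
  · exact b.2

lemma rho_mem (hu : u ∈ A) (hv : v ∈ B) (hee : e = s(u, v)) :
    ∀ x y, (rhoG A B e tA tB).Adj x y →
      x ∈ ((A : Set V) ∪ (B : Set V)) ∧ y ∈ ((A : Set V) ∪ (B : Set V)) := by
  intro x y h
  rw [rhoG_adj] at h
  rcases h with ⟨a, b, _, ha, hb⟩ | ⟨a, b, _, ha, hb⟩ | ⟨hxy, _⟩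
  · exact ⟨Or.inl (ha ▸ a.2), Or.inl (hb ▸ b.2)⟩
  · exact ⟨Or.inr (ha ▸ a.2), Or.inr (hb ▸ b.2)⟩
  · rw [hee, Sym2.eq_iff] at hxy
    rcases hxy with ⟨rfl, rfl⟩ | ⟨rfl, rfl⟩
    · exact ⟨Or.inl hu, Or.inr hv⟩
    · exact ⟨Or.inr hv, Or.inl hu⟩

lemma rho_le (he : e ∈ G.edgeSet) (htAG : tA ≤ G.induce (A : Set V))
    (htBG : tB ≤ G.induce (B : Set V)) : rhoG A B e tA tB ≤ G := by
  intro x y h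
  rw [rhoG_adj] at h
  rcases h with ⟨a, b, hab, ha, hb⟩ | ⟨a, b, hab, ha, hb⟩ | ⟨hxy, _⟩
  · exact ha ▸ hb ▸ (htAG hab)
  · exact ha ▸ hb ▸ (htBG hab)
  · rw [← mem_edgeSet, hxy]; exact he

lemma rho_adjA (hdAB : Disjoint A B) (hu : u ∈ A) (hv : v ∈ B) (hee : e = s(u, v))
    (x y : ↥(A : Set V)) : (rhoG A B e tA tB).Adj ↑x ↑y ↔ tA.Adj x y := by
  rw [rhoG_adj]
  constructor
  · rintro (⟨a, b, hab, ha, hb⟩ | ⟨a, b, hab, ha, hb⟩ | ⟨hxy, _⟩)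
    · rwa [show a = x from Subtype.ext ha, show b = y from Subtype.ext hb] at hab
    · exact absurd (ha ▸ a.2) (fun hc => Finset.disjoint_left.mp hdAB x.2 hc)
    · exfalso
      rw [hee, Sym2.eq_iff] at hxy
      rcases hxy with ⟨_, hyv⟩ | ⟨hxv, _⟩
      · exact Finset.disjoint_left.mp hdAB y.2 (hyv ▸ hv)
      · exact Finset.disjoint_left.mp hdAB x.2 (hxv ▸ hv)
  · intro h
    exact Or.inl ⟨x, y, h, rfl, rfl⟩

lemma rho_adjB (hdAB : Disjoint A B) (hu : u ∈ A) (hv : v ∈ B) (hee : e = s(u, v))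
    (x y : ↥(B : Set V)) : (rhoG A B e tA tB).Adj ↑x ↑y ↔ tB.Adj x y := by
  rw [rhoG_adj]
  constructor
  · rintro (⟨a, b, hab, ha, hb⟩ | ⟨a, b, hab, ha, hb⟩ | ⟨hxy, _⟩)
    · exact absurd (ha ▸ a.2) (fun hc => Finset.disjoint_left.mp hdAB hc x.2)
    · rwa [show a = x from Subtype.ext ha, show b = y from Subtype.ext hb] at hab
    · exfalso
      rw [hee, Sym2.eq_iff] at hxy
      rcases hxy with ⟨hxu, _⟩ | ⟨_, hyu⟩
      · exact Finset.disjoint_left.mp hdAB (hxu ▸ hu) x.2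
      · exact Finset.disjoint_left.mp hdAB (hyu ▸ hu) y.2
  · intro h
    exact Or.inr (Or.inl ⟨x, y, h, rfl, rfl⟩)

lemma rho_cross (hdAB : Disjoint A B) {x y : V} (hx : x ∈ A) (hy : y ∈ B) :
    ((rhoG A B e tA tB).Adj x y ↔ s(x, y) = e) := by
  rw [rhoG_adj]
  constructor
  · rintro (⟨a, b, hab, ha, hb⟩ | ⟨a, b, hab, ha, hb⟩ | ⟨hxy, _⟩)
    · exact absurd (hb ▸ b.2) (fun hc => Finset.disjoint_left.mp hdAB hc hy)
    · exact absurd (ha ▸ a.2) (fun hc => Finset.disjoint_left.mp hdAB hx hc)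
    · exact hxy
  · intro h
    have hne : x ≠ y := fun hc => Finset.disjoint_left.mp hdAB hx (hc ▸ hy)
    exact Or.inr (Or.inr ⟨h, hne⟩)

lemma rho_reach (hdAB : Disjoint A B) (hu : u ∈ A) (hv : v ∈ B) (hee : e = s(u, v))
    (htA : tA.Connected) (htB : tB.Connected) :
    ∀ x ∈ ((A : Set V) ∪ (B : Set V)), ∀ y ∈ ((A : Set V) ∪ (B : Set V)),
      (rhoG A B e tA tB).Reachable x y := by
  have hne : u ≠ v := fun h => Finset.disjoint_left.mp hdAB hu (h ▸ hv)
  have hA : ∀ x y : ↥(A : Set V), (rhoG A B e tA tB).Reachable ↑x ↑y := by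
    intro x y
    have h1 := (htA x y).map (SimpleGraph.Embedding.map (Function.Embedding.subtype _) tA).toHom
    exact h1.mono (le_sup_left.trans le_sup_left)
  have hB : ∀ x y : ↥(B : Set V), (rhoG A B e tA tB).Reachable ↑x ↑y := by
    intro x y
    have h1 := (htB x y).map (SimpleGraph.Embedding.map (Function.Embedding.subtype _) tB).toHom
    exact h1.mono (le_sup_right.trans le_sup_left)
  have hcross : (rhoG A B e tA tB).Adj u v := by
    rw [rhoG_adj]
    exact Or.inr (Or.inr ⟨hee.symm, hne⟩)
  intro x hx y hy
  rcases (Set.mem_union _ _ _).mp hx with hx | hx <;>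
    rcases (Set.mem_union _ _ _).mp hy with hy | hy
  · exact hA ⟨x, hx⟩ ⟨y, hy⟩
  · exact ((hA ⟨x, hx⟩ ⟨u, hu⟩).trans hcross.reachable).trans (hB ⟨v, hv⟩ ⟨y, hy⟩)
  · exact ((hB ⟨x, hx⟩ ⟨v, hv⟩).trans hcross.symm.reachable).trans (hA ⟨u, hu⟩ ⟨y, hy⟩)
  · exact hB ⟨x, hx⟩ ⟨y, hy⟩

lemma rho_ncard [Fintype V] (hdAB : Disjoint A B) (hu : u ∈ A) (hv : v ∈ B)
    (hee : e = s(u, v)) (htA : tA.IsTree) (htB : tB.IsTree) :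
    (rhoG A B e tA tB).edgeSet.ncard + 1 = A.card + B.card := by
  classical
  have hne : u ≠ v := fun h => Finset.disjoint_left.mp hdAB hu (h ▸ hv)
  have hEdiag : ({e} : Set (Sym2 V)) \ Sym2.diagSet = {e} := by
    ext f
    simp only [Set.mem_diff, Set.mem_singleton_iff, Sym2.mem_diagSet, and_iff_left_iff_imp]
    rintro rfl
    simp [hee, hne]
  have hrho : (rhoG A B e tA tB).edgeSet =
      (Sym2.map Subtype.val '' tA.edgeSet ∪ Sym2.map Subtype.val '' tB.edgeSet) ∪ {e} := by
    rw [rhoG, edgeSet_sup, edgeSet_sup, edgeSet_map', edgeSet_map', edgeSet_fromEdgeSet, hEdiag,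
      Function.Embedding.coe_subtype, Function.Embedding.coe_subtype]
  have hdisjAB : Disjoint (Sym2.map Subtype.val '' tA.edgeSet)
      (Sym2.map Subtype.val '' tB.edgeSet) := by
    rw [Set.disjoint_left]
    intro f hfA hfB
    revert hfA hfB
    refine Sym2.ind (fun a b hfA hfB => ?_) f
    have h1 : a ∈ (A : Set V) := mem_image_map_val hfA a (by simp)
    have h2 : a ∈ (B : Set V) := mem_image_map_val hfB a (by simp)
    exact Finset.disjoint_left.mp hdAB h1 h2
  have hdisjE : Disjoint (Sym2.map Subtype.val '' tA.edgeSet ∪ Sym2.map Subtype.val '' tB.edgeSet)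
      ({e} : Set (Sym2 V)) := by
    rw [Set.disjoint_right]
    rintro f rfl hf
    rcases (Set.mem_union _ _ _).mp hf with hf | hf
    · have : v ∈ (A : Set V) := mem_image_map_val hf v (by simp [hee])
      exact Finset.disjoint_left.mp hdAB this hv
    · have : u ∈ (B : Set V) := mem_image_map_val hf u (by simp [hee])
      exact Finset.disjoint_left.mp hdAB hu this
  have hinjA : Function.Injective (Sym2.map (Subtype.val : ↥(A : Set V) → V)) :=
    Sym2.map.injective Subtype.val_injective
  have hinjB : Function.Injective (Sym2.map (Subtype.val : ↥(B : Set V) → V)) :=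
    Sym2.map.injective Subtype.val_injective
  have h1 := tree_ncard' htA
  have h2 := tree_ncard' htB
  have hcA : Nat.card ↥(A : Set V) = A.card := by
    rw [Nat.card_coe_set_eq, Set.ncard_coe_finset]
  have hcB : Nat.card ↥(B : Set V) = B.card := by
    rw [Nat.card_coe_set_eq, Set.ncard_coe_finset]
  rw [hrho, Set.ncard_union_eq hdisjE (Set.toFinite _) (Set.toFinite _),
    Set.ncard_union_eq hdisjAB (Set.toFinite _) (Set.toFinite _), Set.ncard_singleton,
    Set.ncard_image_of_injective _ hinjA, Set.ncard_image_of_injective _ hinjB]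
  omega

end Rho

section Replace

variable {G : SimpleGraph V} {τ ρ : SimpleGraph V} {S : Set V}

lemma replace_le (hτG : τ ≤ G) (hρG : ρ ≤ G) : replaceG τ S ρ ≤ G := by
  intro x y h
  rcases replaceG_adj.mp h with ⟨h1, _⟩ | h1
  · exact hτG h1
  · exact hρG h1

lemma replace_outside (hρS : ∀ x y, ρ.Adj x y → x ∈ S ∧ y ∈ S) :
    {f | f ∈ (replaceG τ S ρ).edgeSet ∧ ¬∀ x ∈ f, x ∈ S}
      = {f | f ∈ τ.edgeSet ∧ ¬∀ x ∈ f, x ∈ S} := by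
  ext f
  refine Sym2.ind (fun x y => ?_) f
  simp only [Set.mem_setOf_eq, mem_edgeSet, sym2_forall_mem]
  constructor
  · rintro ⟨hadj, hns⟩
    rcases replaceG_adj.mp hadj with ⟨ht, _⟩ | hρ
    · exact ⟨ht, hns⟩
    · exact absurd (hρS _ _ hρ) hns
  · rintro ⟨ht, hns⟩
    exact ⟨replaceG_adj.mpr (Or.inl ⟨ht, hns⟩), hns⟩

lemma replace_inside (hρS : ∀ x y, ρ.Adj x y → x ∈ S ∧ y ∈ S) :
    {f | f ∈ (replaceG τ S ρ).edgeSet ∧ ∀ x ∈ f, x ∈ S} = ρ.edgeSet := by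
  ext f
  refine Sym2.ind (fun x y => ?_) f
  simp only [Set.mem_setOf_eq, mem_edgeSet, sym2_forall_mem]
  constructor
  · rintro ⟨hadj, hs⟩
    rcases replaceG_adj.mp hadj with ⟨_, hns⟩ | hρ
    · exact absurd hs hns
    · exact hρ
  · intro h
    exact ⟨replaceG_adj.mpr (Or.inr h), hρS _ _ h⟩

lemma rho_le_replace : ρ ≤ replaceG τ S ρ := fun _ _ h => replaceG_adj.mpr (Or.inr h)

lemma replace_connected (hτ : τ.Connected)
    (hkey : ∀ x ∈ S, ∀ y ∈ S, ρ.Reachable x y) : (replaceG τ S ρ).Connected := by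
  rw [connected_iff]
  refine ⟨fun a b => ?_, hτ.nonempty⟩
  obtain ⟨p⟩ := hτ.preconnected a b
  refine reach_of_walk (fun a b hab => ?_) p
  by_cases hc : a ∈ S ∧ b ∈ S
  · exact (hkey a hc.1 b hc.2).mono rho_le_replace
  · exact (replaceG_adj.mpr (Or.inl ⟨hab, hc⟩)).reachable

lemma replace_adj_outside (hρS : ∀ x y, ρ.Adj x y → x ∈ S ∧ y ∈ S) {x y : V}
    (h : ¬(x ∈ S ∧ y ∈ S)) : (replaceG τ S ρ).Adj x y ↔ τ.Adj x y := by
  rw [replaceG_adj]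
  constructor
  · rintro (⟨h1, _⟩ | h1)
    · exact h1
    · exact absurd (hρS _ _ h1) h
  · intro h1
    exact Or.inl ⟨h1, h⟩

lemma replace_induce_eq_of_disjoint {p : Set V} (hp : Disjoint p S)
    (hρS : ∀ x y, ρ.Adj x y → x ∈ S ∧ y ∈ S) :
    (replaceG τ S ρ).induce p = τ.induce p := by
  ext x y
  exact replace_adj_outside hρS (fun hc => Set.disjoint_left.mp hp x.2 hc.1)

end Replace

section InduceAB

variable {A B : Finset V} {e : Sym2 V} {u v : V} {τ : SimpleGraph V}
  {tA : SimpleGraph ↥(A : Set V)} {tB : SimpleGraph ↥(B : Set V)}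

lemma replace_induceA (hdAB : Disjoint A B) (hu : u ∈ A) (hv : v ∈ B) (hee : e = s(u, v)) :
    (replaceG τ ((A : Set V) ∪ (B : Set V)) (rhoG A B e tA tB)).induce (A : Set V) = tA := by
  ext x y
  show (replaceG τ _ _).Adj ↑x ↑y ↔ tA.Adj x y
  rw [replaceG_adj]
  constructor
  · rintro (⟨_, hns⟩ | hρ)
    · exact absurd ⟨Or.inl x.2, Or.inl y.2⟩ hns
    · exact (rho_adjA hdAB hu hv hee x y).mp hρ
  · intro h
    exact Or.inr ((rho_adjA hdAB hu hv hee x y).mpr h)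

lemma replace_induceB (hdAB : Disjoint A B) (hu : u ∈ A) (hv : v ∈ B) (hee : e = s(u, v)) :
    (replaceG τ ((A : Set V) ∪ (B : Set V)) (rhoG A B e tA tB)).induce (B : Set V) = tB := by
  ext x y
  show (replaceG τ _ _).Adj ↑x ↑y ↔ tB.Adj x y
  rw [replaceG_adj]
  constructor
  · rintro (⟨_, hns⟩ | hρ)
    · exact absurd ⟨Or.inr x.2, Or.inr y.2⟩ hns
    · exact (rho_adjB hdAB hu hv hee x y).mp hρ
  · intro h
    exact Or.inr ((rho_adjB hdAB hu hv hee x y).mpr h)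

end InduceAB

end MsbAux

/-- **Merge-score bound for compatible spanning-tree counts.**  Let `P` be a partition of
the vertices of `G` with `K ≥ 3` blocks and let `A ≠ B` be two of its blocks with
`cut(G, A, B)` nonempty.  Writing `N(Q)` for the number of spanning trees `τ` of `G` with
`Q ≺ τ`, and `P^{A∪B}` for the partition obtained by merging the blocks `A` and `B`,
one has `|cut(G, A, B)| · N(P^{A∪B}) · t(G[A]) · t(G[B]) ≤ N(P) · t(G[A ∪ B])`. -/



theorem merge_score_bound_compatible_trees {V : Type*} [Fintype V] [DecidableEq V]
    (G : SimpleGraph V) (P : Finpartition (Finset.univ : Finset V))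
    (hK : 3 ≤ P.parts.card) (A B : Finset V) (hA : A ∈ P.parts) (hB : B ∈ P.parts)
    (hAB : A ≠ B) (hcut : ∃ u ∈ A, ∃ v ∈ B, G.Adj u v) :
    Nat.card {e : Sym2 V // e ∈ G.edgeSet ∧ ∃ u ∈ A, ∃ v ∈ B, e = s(u, v)} *
        Nat.card {H : SimpleGraph V // H ≤ G ∧ H.IsTree ∧
          (∀ p ∈ P.parts, p ≠ A → p ≠ B → (H.induce (p : Set V)).Connected) ∧
          (H.induce ((A : Set V) ∪ (B : Set V))).Connected} *
        spanningTreeCount (G.induce (A : Set V)) *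
        spanningTreeCount (G.induce (B : Set V)) ≤
      Nat.card {H : SimpleGraph V // H ≤ G ∧ H.IsTree ∧
          ∀ p ∈ P.parts, (H.induce (p : Set V)).Connected} *
        spanningTreeCount (G.induce ((A : Set V) ∪ (B : Set V))) := by
  classical
  have hdAB : Disjoint A B := P.disjoint hA hB hAB
  set S : Set V := (A : Set V) ∪ (B : Set V) with hSdef
  haveI : Fintype ↥S := Fintype.ofFinite _
  haveI : Finite (SimpleGraph ↥S) := Finite.of_fintype _
  haveI : Fintype ↥(A : Set V) := Fintype.ofFinite _
  haveI : Fintype ↥(B : Set V) := Fintype.ofFinite _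
  have hcardS : Nat.card ↥S = A.card + B.card := by
    rw [Nat.card_coe_set_eq, hSdef, ← Finset.coe_union, Set.ncard_coe_finset,
      Finset.card_union_of_disjoint hdAB]
  -- the forward construction and its properties
  have hg1 : ∀ (e : Sym2 V) (τ : SimpleGraph V) (tA : SimpleGraph ↥(A : Set V))
      (tB : SimpleGraph ↥(B : Set V)),
      e ∈ G.edgeSet → (∃ u ∈ A, ∃ v ∈ B, e = s(u, v)) → τ ≤ G → τ.IsTree →
      (∀ p ∈ P.parts, p ≠ A → p ≠ B → (τ.induce (p : Set V)).Connected) →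
      (τ.induce S).Connected → tA ≤ G.induce (A : Set V) → tA.IsTree →
      tB ≤ G.induce (B : Set V) → tB.IsTree →
      (MsbAux.replaceG τ S (MsbAux.rhoG A B e tA tB) ≤ G ∧
        (MsbAux.replaceG τ S (MsbAux.rhoG A B e tA tB)).IsTree ∧
        ∀ p ∈ P.parts, ((MsbAux.replaceG τ S (MsbAux.rhoG A B e tA tB)).induce
          (p : Set V)).Connected) ∧
      (τ.induce S ≤ G.induce S ∧ (τ.induce S).IsTree) := by
    intro e τ tA tB he hex hτG hτt hτp hτS htAG htAt htBG htBt
    obtain ⟨u, hu, v, hv, hee⟩ := hex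
    obtain ⟨hτconn, hτacy⟩ := hτt
    have hρS : ∀ x y, (MsbAux.rhoG A B e tA tB).Adj x y → x ∈ S ∧ y ∈ S :=
      MsbAux.rho_mem hu hv hee
    have hρG := MsbAux.rho_le he htAG htBG
    have hτStree : (τ.induce S).IsTree := ⟨hτS, MsbAux.acyclic_induce hτacy S⟩
    refine ⟨⟨MsbAux.replace_le hτG hρG, ?_, ?_⟩, fun a b h => hτG h, hτStree⟩
    · -- IsTree of the replaced graph
      refine MsbAux.isTree_of_card
        (MsbAux.replace_connected hτconn (fun x hx y hy =>
          MsbAux.rho_reach hdAB hu hv hee htAt.1 htBt.1 x hx y hy)) ?_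
      have hsplit1 := MsbAux.edge_split (MsbAux.replaceG τ S (MsbAux.rhoG A B e tA tB)) S
      have hsplit2 := MsbAux.edge_split τ S
      have hout := congrArg Set.ncard (MsbAux.replace_outside (τ := τ) hρS)
      have hins := congrArg Set.ncard (MsbAux.replace_inside (τ := τ) hρS)
      have hiτ := MsbAux.ncard_induce τ S
      have h5 := MsbAux.tree_ncard' hτStree
      have h6 := MsbAux.rho_ncard hdAB hu hv hee htAt htBt
      have h7 := MsbAux.tree_ncard ⟨hτconn, hτacy⟩
      omega
    · -- induced connectivity on every part
      intro p hp
      by_cases hpA : p = A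
      · subst hpA
        rw [hSdef, MsbAux.replace_induceA hdAB hu hv hee]
        exact htAt.1
      · by_cases hpB : p = B
        · subst hpB
          rw [hSdef, MsbAux.replace_induceB hdAB hu hv hee]
          exact htBt.1
        · have hd1 : Disjoint (p : Set V) S := by
            rw [hSdef, Set.disjoint_union_right]
            exact ⟨Finset.disjoint_coe.mpr (P.disjoint hp hA hpA),
              Finset.disjoint_coe.mpr (P.disjoint hp hB hpB)⟩
          rw [MsbAux.replace_induce_eq_of_disjoint hd1 hρS]
          exact hτp p hp hpA hpB
  -- the map
  set F : ({e : Sym2 V // e ∈ G.edgeSet ∧ ∃ u ∈ A, ∃ v ∈ B, e = s(u, v)} ×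
      {H : SimpleGraph V // H ≤ G ∧ H.IsTree ∧
        (∀ p ∈ P.parts, p ≠ A → p ≠ B → (H.induce (p : Set V)).Connected) ∧
        (H.induce S).Connected} ×
      {H : SimpleGraph ↥(A : Set V) // H ≤ G.induce (A : Set V) ∧ H.IsTree} ×
      {H : SimpleGraph ↥(B : Set V) // H ≤ G.induce (B : Set V) ∧ H.IsTree}) →
      ({H : SimpleGraph V // H ≤ G ∧ H.IsTree ∧
        ∀ p ∈ P.parts, (H.induce (p : Set V)).Connected} ×
      {H : SimpleGraph ↥S // H ≤ G.induce S ∧ H.IsTree}) :=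
    fun x =>
      ⟨⟨MsbAux.replaceG x.2.1.1 S (MsbAux.rhoG A B x.1.1 x.2.2.1.1 x.2.2.2.1),
        (hg1 x.1.1 x.2.1.1 x.2.2.1.1 x.2.2.2.1 x.1.2.1 x.1.2.2 x.2.1.2.1 x.2.1.2.2.1
          x.2.1.2.2.2.1 x.2.1.2.2.2.2 x.2.2.1.2.1 x.2.2.1.2.2 x.2.2.2.2.1 x.2.2.2.2.2).1⟩,
       ⟨x.2.1.1.induce S,
        (hg1 x.1.1 x.2.1.1 x.2.2.1.1 x.2.2.2.1 x.1.2.1 x.1.2.2 x.2.1.2.1 x.2.1.2.2.1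
          x.2.1.2.2.2.1 x.2.1.2.2.2.2 x.2.2.1.2.1 x.2.2.1.2.2 x.2.2.2.2.1 x.2.2.2.2.2).2⟩⟩
    with hFdef
  have hinj : Function.Injective F := by
    intro x y hxy
    obtain ⟨⟨e₁, he₁, hex₁⟩, ⟨τ₁, hτ₁G, hτ₁t, hτ₁p, hτ₁S⟩, ⟨tA₁, htA₁G, htA₁t⟩,
      ⟨tB₁, htB₁G, htB₁t⟩⟩ := x
    obtain ⟨⟨e₂, he₂, hex₂⟩, ⟨τ₂, hτ₂G, hτ₂t, hτ₂p, hτ₂S⟩, ⟨tA₂, htA₂G, htA₂t⟩,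
      ⟨tB₂, htB₂G, htB₂t⟩⟩ := y
    obtain ⟨u₁, hu₁, v₁, hv₁, hee₁⟩ := hex₁
    obtain ⟨u₂, hu₂, v₂, hv₂, hee₂⟩ := hex₂
    have hg : MsbAux.replaceG τ₁ S (MsbAux.rhoG A B e₁ tA₁ tB₁)
        = MsbAux.replaceG τ₂ S (MsbAux.rhoG A B e₂ tA₂ tB₂) :=
      congrArg (fun z => (z.1 : SimpleGraph V)) hxy
    have hT : τ₁.induce S = τ₂.induce S :=
      congrArg (fun z => (z.2 : SimpleGraph ↥S)) hxy
    have hρ₁S : ∀ x y, (MsbAux.rhoG A B e₁ tA₁ tB₁).Adj x y → x ∈ S ∧ y ∈ S :=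
      MsbAux.rho_mem hu₁ hv₁ hee₁
    have hρ₂S : ∀ x y, (MsbAux.rhoG A B e₂ tA₂ tB₂).Adj x y → x ∈ S ∧ y ∈ S :=
      MsbAux.rho_mem hu₂ hv₂ hee₂
    -- recover e
    have heq_e : e₁ = e₂ := by
      have hadj1 : (MsbAux.replaceG τ₁ S (MsbAux.rhoG A B e₁ tA₁ tB₁)).Adj u₁ v₁ :=
        MsbAux.replaceG_adj.mpr (Or.inr ((MsbAux.rho_cross hdAB hu₁ hv₁).mpr hee₁.symm))
      rw [hg] at hadj1
      rcases MsbAux.replaceG_adj.mp hadj1 with ⟨_, hns⟩ | hρ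
      · exact absurd ⟨Or.inl hu₁, Or.inr hv₁⟩ hns
      · rw [hee₁]
        exact (MsbAux.rho_cross hdAB hu₁ hv₁).mp hρ
    -- recover tA, tB
    have heq_tA : tA₁ = tA₂ := by
      rw [← MsbAux.replace_induceA (τ := τ₁) (tA := tA₁) (tB := tB₁) hdAB hu₁ hv₁ hee₁,
        ← MsbAux.replace_induceA (τ := τ₂) (tA := tA₂) (tB := tB₂) hdAB hu₂ hv₂ hee₂]
      exact congrArg (SimpleGraph.induce (A : Set V)) hg
    have heq_tB : tB₁ = tB₂ := by
      rw [← MsbAux.replace_induceB (τ := τ₁) (tA := tA₁) (tB := tB₁) hdAB hu₁ hv₁ hee₁,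
        ← MsbAux.replace_induceB (τ := τ₂) (tA := tA₂) (tB := tB₂) hdAB hu₂ hv₂ hee₂]
      exact congrArg (SimpleGraph.induce (B : Set V)) hg
    -- recover τ
    have heq_τ : τ₁ = τ₂ := by
      ext x' y'
      by_cases hc : x' ∈ S ∧ y' ∈ S
      · have h3 : (τ₁.induce S).Adj ⟨x', hc.1⟩ ⟨y', hc.2⟩
            = (τ₂.induce S).Adj ⟨x', hc.1⟩ ⟨y', hc.2⟩ := by rw [hT]
        exact iff_of_eq h3
      · rw [← MsbAux.replace_adj_outside (τ := τ₁) hρ₁S hc,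
          ← MsbAux.replace_adj_outside (τ := τ₂) hρ₂S hc, hg]
    subst heq_e heq_tA heq_tB heq_τ
    rfl
  have hcard := Nat.card_le_card_of_injective F hinj
  simp only [spanningTreeCount]
  rw [mul_assoc, mul_assoc, ← Nat.card_prod, ← Nat.card_prod, ← Nat.card_prod, ← Nat.card_prod]
  exact hcard
end

section
/- Bijection between edge subsets of a tree and compatible partitions: Let T be a tree on a vertex set V of size N and let 1 ≤ K ≤ N. The map sending a set S of edges of T to the partition of V into the connected components of T − S is a bijection from the (K−1)-element subsets of the edge set of T onto the set of partitions of V into K blocks each of which induces a connected subgraph of T. Consequently, the number of partitions of V into K blocks each inducing a connected subgraph of T equals the binomial coefficient C(N−1, K−1). -/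
open SimpleGraph

/-- The partition of the vertex set of a graph `H` into its connected components. -/
def componentPartition {V : Type*} (H : SimpleGraph V) : Set (Set V) :=
  {s | ∃ c : H.ConnectedComponent, s = c.supp}


lemma reach_cases {V : Type*} (G : SimpleGraph V) (u v : V)
    (h : ¬ (G.deleteEdges {s(u,v)}).Reachable u v) {x y : V} (hr : G.Reachable x y) :
    (G.deleteEdges {s(u,v)}).Reachable x y ∨
    ((G.deleteEdges {s(u,v)}).Reachable x u ∧ (G.deleteEdges {s(u,v)}).Reachable v y) ∨
    ((G.deleteEdges {s(u,v)}).Reachable x v ∧ (G.deleteEdges {s(u,v)}).Reachable u y) := by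
  set G' := G.deleteEdges {s(u,v)} with hG'
  obtain ⟨p⟩ := hr
  induction p with
  | nil => exact Or.inl (Reachable.refl _)
  | @cons a b c hab p ih =>
    by_cases he : s(a,b) = s(u,v)
    · rw [Sym2.eq_iff] at he
      rcases he with ⟨rfl, rfl⟩ | ⟨rfl, rfl⟩
      · -- a = u, b = v
        rcases ih with hib | ⟨h1, h2⟩ | ⟨h1, h2⟩
        · exact Or.inr (Or.inl ⟨Reachable.refl _, hib⟩)
        · exact absurd h1.symm h
        · exact Or.inl h2
      · -- a = v, b = u
        rcases ih with hib | ⟨h1, h2⟩ | ⟨h1, h2⟩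
        · exact Or.inr (Or.inr ⟨Reachable.refl _, hib⟩)
        · exact Or.inl h2
        · exact absurd h1 h
    · have hab' : G'.Reachable a b := (by
        rw [hG', SimpleGraph.deleteEdges_adj]
        exact ⟨hab, by simpa using he⟩ : G'.Adj a b).reachable
      rcases ih with hib | ⟨h1, h2⟩ | ⟨h1, h2⟩
      · exact Or.inl (hab'.trans hib)
      · exact Or.inr (Or.inl ⟨hab'.trans h1, h2⟩)
      · exact Or.inr (Or.inr ⟨hab'.trans h1, h2⟩)

lemma bridge_card_cc {V : Type*} [Fintype V] (G : SimpleGraph V) {u v : V} (hadj : G.Adj u v)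
    (h : ¬ (G.deleteEdges {s(u,v)}).Reachable u v) :
    Nat.card (G.deleteEdges {s(u,v)}).ConnectedComponent = Nat.card G.ConnectedComponent + 1 := by
  classical
  set G' := G.deleteEdges {s(u,v)} with hG'
  let f : G'.ConnectedComponent → G.ConnectedComponent :=
    ConnectedComponent.map (Hom.ofLE (SimpleGraph.deleteEdges_le _))
  have hf : ∀ x : V, f (G'.connectedComponentMk x) = G.connectedComponentMk x := fun x => rfl
  have hne : G'.connectedComponentMk u ≠ G'.connectedComponentMk v :=
    fun hc => h (ConnectedComponent.exact hc)
  let g : {D : G'.ConnectedComponent // D ≠ G'.connectedComponentMk v} → G.ConnectedComponent :=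
    fun D => f D.1
  have hginj : Function.Injective g := by
    rintro ⟨D1, hD1⟩ ⟨D2, hD2⟩ hgd
    obtain ⟨x1, rfl⟩ := D1.exists_rep
    obtain ⟨x2, rfl⟩ := D2.exists_rep
    simp only [g, hf] at hgd
    have hr : G.Reachable x1 x2 := ConnectedComponent.exact hgd
    rcases reach_cases G u v h hr with hr' | ⟨h1, h2⟩ | ⟨h1, h2⟩
    · exact Subtype.ext (ConnectedComponent.sound hr')
    · exact absurd (ConnectedComponent.sound h2.symm) hD2
    · exact absurd (ConnectedComponent.sound h1) hD1
  have hgsurj : Function.Surjective g := by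
    intro C
    obtain ⟨x, rfl⟩ := C.exists_rep
    by_cases hx : G'.connectedComponentMk x = G'.connectedComponentMk v
    · refine ⟨⟨G'.connectedComponentMk u, hne⟩, ?_⟩
      simp only [g, hf]
      have : G'.Reachable v x := ConnectedComponent.exact hx.symm
      exact ConnectedComponent.sound ((hadj.reachable).trans (this.mono (SimpleGraph.deleteEdges_le _)))
    · exact ⟨⟨_, hx⟩, hf x⟩
  haveI : Fintype G'.ConnectedComponent := Fintype.ofFinite _
  haveI : Fintype G.ConnectedComponent := Fintype.ofFinite _
  have hcard := Fintype.card_of_bijective ⟨hginj, hgsurj⟩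
  have h2 : Fintype.card {D : G'.ConnectedComponent // D ≠ G'.connectedComponentMk v}
      = Fintype.card G'.ConnectedComponent - 1 := by
    rw [Fintype.card_subtype_compl, Fintype.card_subtype_eq]
  have hpos : 1 ≤ Fintype.card G'.ConnectedComponent :=
    Fintype.card_pos_iff.mpr ⟨G'.connectedComponentMk v⟩
  rw [Nat.card_eq_fintype_card, Nat.card_eq_fintype_card]
  omega

lemma tree_delete_card_cc {V : Type*} [Fintype V] (T : SimpleGraph V) (hT : T.IsTree)
    (S : Finset (Sym2 V)) (hS : ↑S ⊆ T.edgeSet) :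
    Nat.card (T.deleteEdges (S : Set (Sym2 V))).ConnectedComponent = S.card + 1 := by
  classical
  induction S using Finset.induction_on with
  | empty =>
    simp only [Finset.coe_empty, SimpleGraph.deleteEdges_empty, Finset.card_empty, zero_add]
    have h := hT.isConnected
    haveI : Nonempty T.ConnectedComponent := ⟨T.connectedComponentMk h.nonempty.some⟩
    haveI : Subsingleton T.ConnectedComponent := by
      constructor
      intro a b
      obtain ⟨x, rfl⟩ := a.exists_rep
      obtain ⟨y, rfl⟩ := b.exists_rep
      exact ConnectedComponent.sound (h.preconnected x y)
    exact Nat.card_eq_one_iff_unique.mpr ⟨inferInstance, inferInstance⟩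
  | @insert e S he ih =>
    rw [Finset.coe_insert] at hS
    have heE : e ∈ T.edgeSet := hS (Set.mem_insert _ _)
    have hSE : ↑S ⊆ T.edgeSet := fun x hx => hS (Set.mem_insert_of_mem _ hx)
    induction e using Sym2.ind with
    | _ u v =>
    have hadj : T.Adj u v := heE
    have hadj' : (T.deleteEdges (S : Set (Sym2 V))).Adj u v := by
      rw [SimpleGraph.deleteEdges_adj]
      exact ⟨hadj, fun hc => he hc⟩
    have heq : (T.deleteEdges (S : Set (Sym2 V))).deleteEdges {s(u,v)}
        = T.deleteEdges ((insert s(u,v) S : Finset (Sym2 V)) : Set (Sym2 V)) := by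
      rw [SimpleGraph.deleteEdges_deleteEdges, Finset.coe_insert]
      congr 1
      rw [Set.union_comm, Set.insert_eq]
    have hbr : T.IsBridge s(u,v) := isAcyclic_iff_forall_adj_isBridge.mp hT.IsAcyclic hadj
    have hnr : ¬ ((T.deleteEdges (S : Set (Sym2 V))).deleteEdges {s(u,v)}).Reachable u v := by
      intro hc
      refine (SimpleGraph.isBridge_iff.mp hbr) ?_
      refine hc.mono ?_
      rw [SimpleGraph.deleteEdges_deleteEdges]
      exact SimpleGraph.deleteEdges_anti (by simp)
    have := bridge_card_cc (T.deleteEdges (S : Set (Sym2 V))) hadj' hnr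
    rw [heq] at this
    rw [this, ih hSE, Finset.card_insert_of_notMem he]

lemma componentPartition_ncard {V : Type*} [Fintype V] (H : SimpleGraph V) :
    ({s | ∃ c : H.ConnectedComponent, s = c.supp} : Set (Set V)).ncard
      = Nat.card H.ConnectedComponent := by
  have : {s | ∃ c : H.ConnectedComponent, s = c.supp} = Set.range (ConnectedComponent.supp (G := H)) := by
    ext s; simp [Set.range, eq_comm]
  rw [this, ← Nat.card_coe_set_eq, Nat.card_range_of_injective ConnectedComponent.supp_injective]

lemma supp_induce_connected {V : Type*} (H : SimpleGraph V) (c : H.ConnectedComponent) :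
    (H.induce c.supp).Connected := by
  rw [SimpleGraph.connected_induce_iff, Subgraph.connected_iff_forall_exists_walk_subgraph]
  constructor
  · obtain ⟨x, rfl⟩ := c.exists_rep
    exact ⟨x, rfl⟩
  · classical
    intro u v hu hv
    simp only [Subgraph.induce_verts, Subgraph.verts_top] at hu hv
    rw [ConnectedComponent.mem_supp_iff] at hu hv
    obtain ⟨p⟩ : H.Reachable u v := ConnectedComponent.exact (hu.trans hv.symm)
    refine ⟨p, le_trans p.toSubgraph_le_induce_support (Subgraph.induce_mono_right ?_)⟩
    intro w hw
    rw [ConnectedComponent.mem_supp_iff, ← hu]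
    exact ConnectedComponent.sound ⟨(p.takeUntil w hw).reverse⟩

lemma componentPartition_isPartition {V : Type*} (H : SimpleGraph V) :
    Setoid.IsPartition {s | ∃ c : H.ConnectedComponent, s = c.supp} := by
  constructor
  · rintro ⟨c, hc⟩
    obtain ⟨x, hx⟩ := c.exists_rep
    have hmem : x ∈ c.supp := hx
    rw [← hc] at hmem
    exact hmem
  · intro a
    refine ⟨(H.connectedComponentMk a).supp, ⟨⟨_, rfl⟩, by simp [ConnectedComponent.mem_supp_iff]⟩, ?_⟩
    rintro s ⟨⟨d, rfl⟩, has⟩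
    rw [ConnectedComponent.mem_supp_iff] at has
    rw [has]

lemma mem_S_iff {V : Type*} (T : SimpleGraph V) (hT : T.IsAcyclic) (S : Set (Sym2 V))
    (u v : V) (hadj : T.Adj u v) :
    s(u,v) ∈ S ↔ ¬ (T.deleteEdges S).Reachable u v := by
  classical
  constructor
  · intro hmem hr
    obtain ⟨p⟩ := hr
    obtain ⟨q, hq⟩ : ∃ q : (T.deleteEdges S).Walk u v, q.IsPath := ⟨p.toPath.1, p.toPath.2⟩
    have hsub : ∀ e ∈ q.edges, e ∈ T.edgeSet := fun e he =>
      ((T.edgeSet_deleteEdges S) ▸ q.edges_subset_edgeSet he).1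
    have hq' : (q.transfer T hsub).IsPath := by
      rw [Walk.isPath_def, Walk.support_transfer]
      exact hq.support_nodup
    have huniq := hT.path_unique ⟨q.transfer T hsub, hq'⟩ (Path.singleton hadj)
    have : s(u,v) ∈ (q.transfer T hsub).edges := by
      rw [show q.transfer T hsub = (Path.singleton hadj).1 from congrArg Subtype.val huniq]
      exact Path.mk'_mem_edges_singleton hadj
    rw [Walk.edges_transfer] at this
    have := q.edges_subset_edgeSet this
    rw [T.edgeSet_deleteEdges S] at this
    exact this.2 hmem
  · intro h
    by_contra hmem
    exact h (SimpleGraph.Adj.reachable (by rw [SimpleGraph.deleteEdges_adj]; exact ⟨hadj, hmem⟩))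

lemma supp_eq_block {V : Type*} (T : SimpleGraph V) (P : Set (Set V)) (hP : Setoid.IsPartition P)
    (hconn : ∀ b ∈ P, (T.induce b).Connected) (S : Set (Sym2 V))
    (hS1 : ∀ u v : V, T.Adj u v → s(u,v) ∉ S → ∃ b ∈ P, u ∈ b ∧ v ∈ b)
    (hS2 : ∀ b ∈ P, ∀ x y : V, x ∈ b → y ∈ b → T.Adj x y → s(x,y) ∉ S)
    (b : Set V) (hb : b ∈ P) (x : V) (hx : x ∈ b) :
    ((T.deleteEdges S).connectedComponentMk x).supp = b := by
  let hom : T.induce b →g T.deleteEdges S :=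
    ⟨Subtype.val, fun {a c} hac => by
      rw [SimpleGraph.deleteEdges_adj]
      exact ⟨hac, hS2 b hb a.1 c.1 a.2 c.2 hac⟩⟩
  have key : ∀ (a d : V) (p : (T.deleteEdges S).Walk a d), a ∈ b → d ∈ b := by
    intro a d p
    induction p with
    | nil => exact id
    | @cons a c d hac p ih =>
      intro ha
      rw [SimpleGraph.deleteEdges_adj] at hac
      obtain ⟨b', hb', ha', hc'⟩ := hS1 a c hac.1 hac.2
      have hbb : b' = b := ExistsUnique.unique (hP.2 a) ⟨hb', ha'⟩ ⟨hb, ha⟩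
      exact ih (hbb ▸ hc')
  ext y
  rw [ConnectedComponent.mem_supp_iff, ConnectedComponent.eq]
  constructor
  · intro hr
    obtain ⟨p⟩ := hr.symm
    exact key x y p hx
  · intro hy
    have := (hconn b hb).preconnected ⟨x, hx⟩ ⟨y, hy⟩
    exact (this.map hom).symm


lemma reachable_iff_block {V : Type*} (H : SimpleGraph V) (u v : V) :
    H.Reachable u v ↔ ∃ p ∈ componentPartition H, u ∈ p ∧ v ∈ p := by
  constructor
  · intro hr
    exact ⟨(H.connectedComponentMk u).supp, ⟨_, rfl⟩, rfl,
      (ConnectedComponent.mem_supp_iff _ _).mpr (ConnectedComponent.sound hr.symm)⟩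
  · rintro ⟨p, ⟨c, rfl⟩, hu, hv⟩
    rw [ConnectedComponent.mem_supp_iff] at hu hv
    exact ConnectedComponent.exact (hu.trans hv.symm)

/-- **Bijection between edge subsets of a tree and compatible partitions.**  For a tree
`T` on `N` vertices and `1 ≤ K ≤ N`, the map sending a set `S` of edges of `T` to the
partition of the vertices into the connected components of `T − S` is a bijection from
the `(K−1)`-element subsets of the edge set of `T` onto the partitions of the vertex set
into `K` blocks each of which induces a connected subgraph of `T`.  Consequently, the
number of such partitions is the binomial coefficient `C(N−1, K−1)`. -/
theorem tree_edge_subsets_partitions_bijection {V : Type*} [Fintype V]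
    (T : SimpleGraph V) [DecidableRel T.Adj] (hT : T.IsTree)
    {N K : ℕ} (hN : Fintype.card V = N) (hK1 : 1 ≤ K) (hKN : K ≤ N) :
    Set.BijOn
      (fun S : Finset (Sym2 V) => componentPartition (T.deleteEdges (S : Set (Sym2 V))))
      {S : Finset (Sym2 V) | S ⊆ T.edgeFinset ∧ S.card = K - 1}
      {P : Set (Set V) | Setoid.IsPartition P ∧ P.ncard = K ∧
        ∀ s ∈ P, (T.induce s).Connected} ∧
    {P : Set (Set V) | Setoid.IsPartition P ∧ P.ncard = K ∧
        ∀ s ∈ P, (T.induce s).Connected}.ncard = (N - 1).choose (K - 1) := by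
  classical
  have hcardCC : ∀ S : Finset (Sym2 V), S ⊆ T.edgeFinset →
      (componentPartition (T.deleteEdges (S : Set (Sym2 V)))).ncard = S.card + 1 := by
    intro S hS
    have hE : (S : Set (Sym2 V)) ⊆ T.edgeSet := by
      intro e he
      exact (SimpleGraph.mem_edgeFinset).mp (hS he)
    rw [show componentPartition (T.deleteEdges (S : Set (Sym2 V)))
        = {s | ∃ c : (T.deleteEdges (S : Set (Sym2 V))).ConnectedComponent, s = c.supp} from rfl,
      componentPartition_ncard, tree_delete_card_cc T hT S hE]
  -- MapsTo
  have hmaps : ∀ S : Finset (Sym2 V), S ⊆ T.edgeFinset → S.card = K - 1 →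
      Setoid.IsPartition (componentPartition (T.deleteEdges (S : Set (Sym2 V)))) ∧
      (componentPartition (T.deleteEdges (S : Set (Sym2 V)))).ncard = K ∧
      ∀ s ∈ componentPartition (T.deleteEdges (S : Set (Sym2 V))), (T.induce s).Connected := by
    intro S hS hcard
    refine ⟨componentPartition_isPartition _, ?_, ?_⟩
    · rw [hcardCC S hS, hcard]
      omega
    · rintro s ⟨c, rfl⟩
      refine (supp_induce_connected _ c).mono ?_
      intro a b hab
      have h2 : (T.deleteEdges (S : Set (Sym2 V))).Adj a.1 b.1 := hab
      exact ((SimpleGraph.deleteEdges_le _) h2 : T.Adj a.1 b.1)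
  -- membership criterion
  have hmem : ∀ S : Finset (Sym2 V), S ⊆ T.edgeFinset → ∀ u v : V, T.Adj u v →
      (s(u,v) ∈ S ↔ ¬ ∃ p ∈ componentPartition (T.deleteEdges (S : Set (Sym2 V))), u ∈ p ∧ v ∈ p) := by
    intro S hS u v hadj
    rw [← reachable_iff_block]
    exact_mod_cast mem_S_iff T hT.IsAcyclic (S : Set (Sym2 V)) u v hadj
  -- InjOn
  have hinj : Set.InjOn (fun S : Finset (Sym2 V) => componentPartition (T.deleteEdges (S : Set (Sym2 V))))
      {S : Finset (Sym2 V) | S ⊆ T.edgeFinset ∧ S.card = K - 1} := by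
    rintro S1 ⟨hS1, -⟩ S2 ⟨hS2, -⟩ heq
    simp only at heq
    ext e
    induction e using Sym2.ind with
    | _ u v =>
    constructor
    · intro h
      have hadj : T.Adj u v := (SimpleGraph.mem_edgeFinset).mp (hS1 h)
      rw [hmem S2 hS2 u v hadj, ← heq, ← hmem S1 hS1 u v hadj]
      exact h
    · intro h
      have hadj : T.Adj u v := (SimpleGraph.mem_edgeFinset).mp (hS2 h)
      rw [hmem S1 hS1 u v hadj, heq, ← hmem S2 hS2 u v hadj]
      exact h
  -- SurjOn
  have hsurj : ∀ P : Set (Set V), Setoid.IsPartition P → P.ncard = K →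
      (∀ s ∈ P, (T.induce s).Connected) →
      ∃ S : Finset (Sym2 V), (S ⊆ T.edgeFinset ∧ S.card = K - 1) ∧
        componentPartition (T.deleteEdges (S : Set (Sym2 V))) = P := by
    intro P hP hPK hPconn
    set S : Finset (Sym2 V) := T.edgeFinset.filter (fun e => ¬ ∃ b ∈ P, ∀ x ∈ e, x ∈ b) with hSdef
    have hSsub : S ⊆ T.edgeFinset := Finset.filter_subset _ _
    have hS1 : ∀ u v : V, T.Adj u v → s(u,v) ∉ (S : Set (Sym2 V)) → ∃ b ∈ P, u ∈ b ∧ v ∈ b := by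
      intro u v hadj hns
      have : ¬ (s(u,v) ∈ T.edgeFinset ∧ ¬ ∃ b ∈ P, ∀ x ∈ s(u,v), x ∈ b) := by
        intro hc
        exact hns (by rw [hSdef]; exact Finset.mem_filter.mpr hc)
      push_neg at this
      obtain ⟨b, hb, hall⟩ := this ((SimpleGraph.mem_edgeFinset).mpr hadj)
      exact ⟨b, hb, hall u (by simp), hall v (by simp)⟩
    have hS2 : ∀ b ∈ P, ∀ x y : V, x ∈ b → y ∈ b → T.Adj x y → s(x,y) ∉ (S : Set (Sym2 V)) := by
      intro b hb x y hx hy hadj hc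
      rw [hSdef, Finset.mem_coe, Finset.mem_filter] at hc
      exact hc.2 ⟨b, hb, fun z hz => by rcases Sym2.mem_iff.mp hz with rfl | rfl <;> assumption⟩
    have hblock : ∀ b ∈ P, ∀ x ∈ b,
        ((T.deleteEdges (S : Set (Sym2 V))).connectedComponentMk x).supp = b :=
      fun b hb x hx => supp_eq_block T P hP hPconn _ hS1 hS2 b hb x hx
    have hCP : componentPartition (T.deleteEdges (S : Set (Sym2 V))) = P := by
      ext s
      constructor
      · rintro ⟨c, rfl⟩
        obtain ⟨x, rfl⟩ := c.exists_rep
        obtain ⟨b, ⟨hb, hxb⟩, -⟩ := hP.2 x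
        exact Set.mem_of_eq_of_mem (hblock b hb x hxb) hb
      · intro hs
        obtain ⟨x, hx⟩ : s.Nonempty := by
          rcases Set.eq_empty_or_nonempty s with rfl | h
          · exact absurd hs hP.1
          · exact h
        exact ⟨_, (hblock s hs x hx).symm⟩
    have hScard : S.card = K - 1 := by
      have h1 := hcardCC S hSsub
      rw [hCP, hPK] at h1
      omega
    exact ⟨S, ⟨hSsub, hScard⟩, hCP⟩
  have hbij : Set.BijOn
      (fun S : Finset (Sym2 V) => componentPartition (T.deleteEdges (S : Set (Sym2 V))))
      {S : Finset (Sym2 V) | S ⊆ T.edgeFinset ∧ S.card = K - 1}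
      {P : Set (Set V) | Setoid.IsPartition P ∧ P.ncard = K ∧
        ∀ s ∈ P, (T.induce s).Connected} := by
    refine ⟨?_, hinj, ?_⟩
    · rintro S ⟨hS, hcard⟩
      exact hmaps S hS hcard
    · rintro P ⟨hP, hPK, hPconn⟩
      obtain ⟨S, hSmem, hSeq⟩ := hsurj P hP hPK hPconn
      exact ⟨S, hSmem, hSeq⟩
  refine ⟨hbij, ?_⟩
  rw [← hbij.image_eq, Set.ncard_image_of_injOn hinj]
  have : {S : Finset (Sym2 V) | S ⊆ T.edgeFinset ∧ S.card = K - 1}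
      = ↑(T.edgeFinset.powersetCard (K - 1)) := by
    ext S
    simp [Finset.mem_powersetCard]
  have hEcard : T.edgeFinset.card = N - 1 := by
    have := hT.card_edgeFinset
    omega
  rw [this, Set.ncard_coe_finset, Finset.card_powersetCard, hEcard]
end

section
/- Normalization of the contiguity-constrained prior: Let G be a finite simple graph on a vertex set V of size N and let 1 ≤ K ≤ N. Then Σ_P N(P) = t(G) · C(N−1, K−1), where the sum ranges over all partitions P of V into exactly K nonempty blocks and N(P) denotes the number of spanning trees τ of G such that P ≺ τ. -/
section Helpers

open SimpleGraph Finset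

variable {V : Type*}

/-- A walk staying inside `s` gives reachability in the induced graph. -/
lemma reachable_induce_of_walk {H : SimpleGraph V} {s : Set V} :
    ∀ {u v : V} (p : H.Walk u v) (_ : ∀ x ∈ p.support, x ∈ s),
      (H.induce s).Reachable ⟨u, by simp_all⟩ ⟨v, by simp_all⟩ := by
  intro u v p
  induction p with
  | nil => intro h; rfl
  | cons h p ih =>
      intro hs
      refine (SimpleGraph.Adj.reachable ?_).trans (ih ?_)
      · exact h
      · intro x hx; exact hs x (by simp [hx])

lemma connected_induce_supp {H : SimpleGraph V} (c : H.ConnectedComponent) :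
    (H.induce c.supp).Connected := by
  classical
  induction c using SimpleGraph.ConnectedComponent.ind with
  | _ v =>
  rw [SimpleGraph.connected_iff]
  refine ⟨?_, ⟨⟨v, by simp [ConnectedComponent.mem_supp_iff]⟩⟩⟩
  rintro ⟨x, hx⟩ ⟨y, hy⟩
  rw [ConnectedComponent.mem_supp_iff, ConnectedComponent.eq] at hx hy
  obtain ⟨p⟩ := hx.trans hy.symm
  have hsup : ∀ z ∈ p.support, z ∈ (H.connectedComponentMk v).supp := by
      intro z hz
      rw [ConnectedComponent.mem_supp_iff, ConnectedComponent.eq]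
      exact (p.takeUntil z hz).reachable.symm.trans hx
  exact reachable_induce_of_walk p hsup

lemma isAcyclic_induce {H : SimpleGraph V} (h : H.IsAcyclic) (s : Set V) :
    (H.induce s).IsAcyclic := by
  intro v p hp
  exact h (p.map (SimpleGraph.Embedding.induce s).toHom)
    (hp.map Subtype.val_injective)

noncomputable def compEquiv [Fintype V] (H : SimpleGraph V) :
    V ≃ Σ c : H.ConnectedComponent, c.supp where
  toFun v := ⟨H.connectedComponentMk v, v, rfl⟩
  invFun x := x.2.1
  left_inv v := rfl
  right_inv := by
    rintro ⟨c, v, hv⟩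
    have h : H.connectedComponentMk v = c := hv
    subst h
    rfl

noncomputable def dartEquiv (H : SimpleGraph V) :
    H.Dart ≃ Σ c : H.ConnectedComponent, (H.induce c.supp).Dart where
  toFun d := ⟨H.connectedComponentMk d.fst,
    ⟨(⟨d.fst, rfl⟩, ⟨d.snd, SimpleGraph.ConnectedComponent.sound d.adj.symm.reachable⟩), d.adj⟩⟩
  invFun x := ⟨(x.2.fst.val, x.2.snd.val), x.2.adj⟩
  left_inv d := rfl
  right_inv := by
    rintro ⟨c, ⟨⟨⟨a, ha⟩, ⟨b, hb⟩⟩, hadj⟩⟩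
    have h : H.connectedComponentMk a = c := ha
    subst h
    rfl

lemma card_cc_add_card_edges [Fintype V] (H : SimpleGraph V) (hH : H.IsAcyclic) :
    Nat.card H.ConnectedComponent + Nat.card H.edgeSet = Fintype.card V := by
  classical
  rw [Nat.card_eq_fintype_card, Nat.card_eq_fintype_card, ← SimpleGraph.edgeFinset_card]
  have h3 : ∀ c : H.ConnectedComponent,
      (H.induce c.supp).edgeFinset.card + 1 = Fintype.card c.supp := fun c =>
    SimpleGraph.IsTree.card_edgeFinset ⟨connected_induce_supp c, isAcyclic_induce hH _⟩
  have h1 : Fintype.card V = ∑ c : H.ConnectedComponent, Fintype.card c.supp := by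
    rw [Fintype.card_congr (compEquiv H), Fintype.card_sigma]
  have hd : Fintype.card H.Dart = ∑ c : H.ConnectedComponent,
      Fintype.card (H.induce c.supp).Dart := by
    rw [Fintype.card_congr (dartEquiv H), Fintype.card_sigma]
  have e1 : Fintype.card H.Dart = 2 * H.edgeFinset.card :=
    SimpleGraph.dart_card_eq_twice_card_edges H
  have e2 : ∀ c : H.ConnectedComponent,
      Fintype.card (H.induce c.supp).Dart = 2 * (H.induce c.supp).edgeFinset.card := fun c =>
    SimpleGraph.dart_card_eq_twice_card_edges _
  have h2 : 2 * H.edgeFinset.card =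
      ∑ c : H.ConnectedComponent, 2 * (H.induce c.supp).edgeFinset.card := by
    rw [← e1, hd]
    exact Finset.sum_congr rfl fun c _ => e2 c
  rw [← Finset.mul_sum] at h2
  have h2' : H.edgeFinset.card = ∑ c : H.ConnectedComponent, (H.induce c.supp).edgeFinset.card :=
    Nat.eq_of_mul_eq_mul_left (by norm_num) h2
  have key : Fintype.card V =
      H.edgeFinset.card + Fintype.card H.ConnectedComponent := by
    calc Fintype.card V = ∑ c : H.ConnectedComponent, Fintype.card c.supp := h1
      _ = ∑ c : H.ConnectedComponent, ((H.induce c.supp).edgeFinset.card + 1) :=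
          Finset.sum_congr rfl fun c _ => (h3 c).symm
      _ = (∑ c : H.ConnectedComponent, (H.induce c.supp).edgeFinset.card)
            + Fintype.card H.ConnectedComponent := by
          rw [Finset.sum_add_distrib, Finset.sum_const, Finset.card_univ, smul_eq_mul, mul_one]
      _ = H.edgeFinset.card + Fintype.card H.ConnectedComponent := by rw [h2']
  omega

lemma finpartition_eq_of_part_eq {α : Type*} [DecidableEq α] [Fintype α]
    {P Q : Finpartition (Finset.univ : Finset α)} (h : ∀ x, P.part x = Q.part x) : P = Q := by
  ext q
  constructor
  · intro hq
    obtain ⟨x, hx⟩ := P.nonempty_of_mem_parts hq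
    have : q = P.part x := (P.part_eq_of_mem hq hx).symm
    rw [this, h]
    exact Q.part_mem.mpr (Finset.mem_univ x)
  · intro hq
    obtain ⟨x, hx⟩ := Q.nonempty_of_mem_parts hq
    have : q = Q.part x := (Q.part_eq_of_mem hq hx).symm
    rw [this, ← h]
    exact P.part_mem.mpr (Finset.mem_univ x)

lemma part_ofSetoid_eq_iff {α : Type*} [DecidableEq α] [Fintype α]
    (s : Setoid α) [DecidableRel s.r] (a b : α) :
    (Finpartition.ofSetoid s).part a = (Finpartition.ofSetoid s).part b ↔ s.r a b := by
  constructor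
  · intro h
    have hb : b ∈ (Finpartition.ofSetoid s).part b :=
      (Finpartition.ofSetoid s).mem_part (Finset.mem_univ b)
    rw [← h] at hb
    exact Finpartition.mem_part_ofSetoid_iff_rel.mp hb
  · intro h
    ext c
    rw [Finpartition.mem_part_ofSetoid_iff_rel, Finpartition.mem_part_ofSetoid_iff_rel]
    exact ⟨fun h' => s.trans (s.symm h) h', fun h' => s.trans h h'⟩

lemma card_parts_ofSetoid {α : Type*} [DecidableEq α] [Fintype α]
    (s : Setoid α) [DecidableRel s.r] :
    (Finpartition.ofSetoid s).parts.card = Nat.card (Quotient s) := by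
  classical
  have hwd : ∀ a b : α, s.r a b →
      ({b' | s.r a b'} : Finset α) = ({b' | s.r b b'} : Finset α) := by
    intro a b hab
    ext c
    simp only [Finset.mem_filter, Finset.mem_univ, true_and, Set.mem_setOf_eq]
    exact ⟨fun h => s.trans (s.symm hab) h, fun h => s.trans hab h⟩
  set F : Quotient s → Finset α := Quotient.lift (fun a => ({b' | s.r a b'} : Finset α)) hwd
    with hF
  have hFinj : Function.Injective F := by
    intro q1 q2 h
    induction q1 using Quotient.ind
    induction q2 using Quotient.ind
    rename_i a b
    simp only [hF, Quotient.lift_mk] at h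
    have : b ∈ ({b' | s.r a b'} : Finset α) := by
      rw [h]; simp only [Finset.mem_filter, Finset.mem_univ, true_and, Set.mem_setOf_eq]
      exact s.refl b
    simp only [Finset.mem_filter, Finset.mem_univ, true_and, Set.mem_setOf_eq] at this
    exact Quotient.sound this
  have hparts : (Finpartition.ofSetoid s).parts =
      Finset.univ.image (fun q : Quotient s => F q) := by
    show Finset.univ.image (fun a => ({b' | s.r a b'} : Finset α)) = _
    rw [← Finset.image_univ_of_surjective (Quotient.mk''_surjective (s₁ := s)),
      Finset.image_image]
    rfl
  rw [hparts, Finset.card_image_of_injective _ hFinj, Finset.card_univ,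
    Nat.card_eq_fintype_card]


/-- Both endpoints of the edge lie in the same part of `P`. -/
def samePart [Fintype V] [DecidableEq V] (P : Finpartition (Finset.univ : Finset V))
    (e : Sym2 V) : Prop :=
  Sym2.lift ⟨fun a b => P.part a = P.part b, fun a b => propext ⟨Eq.symm, Eq.symm⟩⟩ e

@[simp] lemma samePart_mk [Fintype V] [DecidableEq V]
    (P : Finpartition (Finset.univ : Finset V)) (a b : V) :
    samePart P s(a, b) ↔ P.part a = P.part b := Iff.rfl

open scoped Classical in
/-- The set of edges of `H` whose endpoints lie in different parts of `P`. -/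
noncomputable def cutF [Fintype V] [DecidableEq V] (H : SimpleGraph V)
    (P : Finpartition (Finset.univ : Finset V)) : Finset (Sym2 V) :=
  H.edgeFinset.filter fun e => ¬ samePart P e

open scoped Classical in
lemma mem_cutF [Fintype V] [DecidableEq V] {H : SimpleGraph V}
    {P : Finpartition (Finset.univ : Finset V)} {e : Sym2 V} :
    e ∈ cutF H P ↔ e ∈ H.edgeSet ∧ ¬ samePart P e := by
  simp [cutF, SimpleGraph.mem_edgeFinset]

lemma reachable_of_induce {H H' : SimpleGraph V} {s : Set V}
    (hadj : ∀ a b : V, a ∈ s → b ∈ s → H.Adj a b → H'.Adj a b) :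
    ∀ {u v : s}, (H.induce s).Reachable u v → H'.Reachable u v := by
  intro u v h
  obtain ⟨w⟩ := h
  induction w with
  | nil => exact SimpleGraph.Reachable.refl _
  | cons h p ih =>
      rename_i a b c
      exact (SimpleGraph.Adj.reachable (hadj a.1 b.1 a.2 b.2 h)).trans ih

lemma fact1 [Fintype V] [DecidableEq V] {H : SimpleGraph V}
    (P : Finpartition (Finset.univ : Finset V))
    (hP : ∀ p ∈ P.parts, (H.induce (p : Set V)).Connected) (x y : V) :
    (H.deleteEdges (cutF H P : Set (Sym2 V))).Reachable x y ↔ P.part x = P.part y := by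
  constructor
  · rintro ⟨w⟩
    induction w with
    | nil => rfl
    | cons h q ih =>
        rename_i a b c
        rw [SimpleGraph.deleteEdges_adj] at h
        have hmem : s(a, b) ∈ H.edgeSet := h.1
        have hnn : ¬ ¬ samePart P s(a, b) := fun hcon =>
          h.2 (Finset.mem_coe.mpr (mem_cutF.mpr ⟨hmem, hcon⟩))
        rw [not_not, samePart_mk] at hnn
        exact hnn.trans ih
  · intro hxy
    have hpmem : P.part x ∈ P.parts := P.part_mem.mpr (Finset.mem_univ x)
    have hx : x ∈ P.part x := P.mem_part (Finset.mem_univ x)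
    have hy : y ∈ P.part x := by rw [hxy]; exact P.mem_part (Finset.mem_univ y)
    have hconn := hP _ hpmem
    have hreach := hconn.preconnected ⟨x, hx⟩ ⟨y, hy⟩
    refine reachable_of_induce (fun a b ha hb hab => ?_) hreach
    rw [SimpleGraph.deleteEdges_adj]
    refine ⟨hab, fun hcon => ?_⟩
    have hsp := (mem_cutF.mp (Finset.mem_coe.mp hcon)).2
    rw [samePart_mk] at hsp
    exact hsp (by
      rw [P.part_eq_of_mem hpmem (Finset.mem_coe.mp ha),
        P.part_eq_of_mem hpmem (Finset.mem_coe.mp hb)])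

open scoped Classical in
lemma fact2 [Fintype V] [DecidableEq V] {H : SimpleGraph V}
    (P : Finpartition (Finset.univ : Finset V))
    (hP : ∀ p ∈ P.parts, (H.induce (p : Set V)).Connected) :
    P = Finpartition.ofSetoid (H.deleteEdges (cutF H P : Set (Sym2 V))).reachableSetoid := by
  apply finpartition_eq_of_part_eq
  intro x
  ext b
  rw [Finpartition.mem_part_ofSetoid_iff_rel]
  show _ ↔ (H.deleteEdges (cutF H P : Set (Sym2 V))).Reachable x b
  rw [fact1 P hP x b]
  constructor
  · intro h; exact (P.part_eq_of_mem (P.part_mem.mpr (Finset.mem_univ x)) h).symm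
  · intro h; rw [h]; exact P.mem_part (Finset.mem_univ b)

open scoped Classical in
lemma parts_ofSetoid_connected [Fintype V] [DecidableEq V] {H H' : SimpleGraph V}
    (hle : H' ≤ H) :
    ∀ p ∈ (Finpartition.ofSetoid H'.reachableSetoid).parts,
      (H.induce (p : Set V)).Connected := by
  intro p hp
  obtain ⟨a, ha⟩ := Finpartition.nonempty_of_mem_parts _ hp
  have hpart : (Finpartition.ofSetoid H'.reachableSetoid).part a = p :=
    Finpartition.part_eq_of_mem _ hp ha
  have hsupp : (p : Set V) = (H'.connectedComponentMk a).supp := by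
    ext b
    show b ∈ ↑p ↔ b ∈ (H'.connectedComponentMk a).supp
    rw [SimpleGraph.ConnectedComponent.mem_supp_iff, SimpleGraph.ConnectedComponent.eq,
      ← hpart, Finpartition.mem_part_ofSetoid_iff_rel]
    show H'.Reachable a b ↔ H'.Reachable b a
    exact ⟨fun h => h.symm, fun h => h.symm⟩
  rw [hsupp]
  have hmono : H'.induce ((H'.connectedComponentMk a).supp) ≤
      H.induce ((H'.connectedComponentMk a).supp) := by
    intro x y hxy
    exact hle hxy
  exact (connected_induce_supp _).mono hmono

open scoped Classical in
lemma fact3c [Fintype V] [DecidableEq V] {H : SimpleGraph V} (hH : H.IsAcyclic)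
    {S : Finset (Sym2 V)} (hS : S ⊆ H.edgeFinset) :
    cutF H (Finpartition.ofSetoid (H.deleteEdges (S : Set (Sym2 V))).reachableSetoid) = S := by
  ext e
  induction e using Sym2.ind with
  | _ u v =>
    rw [mem_cutF, samePart_mk, part_ofSetoid_eq_iff]
    show (s(u, v) ∈ H.edgeSet ∧ ¬ (H.deleteEdges (S : Set (Sym2 V))).Reachable u v) ↔ _
    constructor
    · rintro ⟨he, hnr⟩
      by_contra hns
      exact hnr (SimpleGraph.Adj.reachable
        (SimpleGraph.deleteEdges_adj.mpr ⟨H.mem_edgeSet.mp he,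
          fun hc => hns (Finset.mem_coe.mp hc)⟩))
    · intro heS
      have he : s(u, v) ∈ H.edgeSet := SimpleGraph.mem_edgeFinset.mp (hS heS)
      refine ⟨he, fun hr => ?_⟩
      have hbridge := SimpleGraph.isAcyclic_iff_forall_adj_isBridge.mp hH
        (H.mem_edgeSet.mp he)
      rw [SimpleGraph.isBridge_iff] at hbridge
      refine hbridge (hr.mono ?_)
      exact SimpleGraph.deleteEdges_anti (by simp [heS])

open scoped Classical in
lemma key_count [Fintype V] [DecidableEq V] (H : SimpleGraph V) (hH : H.IsTree)
    {N K : ℕ} (hN : Fintype.card V = N) (hK1 : 1 ≤ K) (hKN : K ≤ N) :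
    (Finset.univ.filter fun P : Finpartition (Finset.univ : Finset V) =>
        P.parts.card = K ∧ ∀ p ∈ P.parts, (H.induce (p : Set V)).Connected).card
      = (N - 1).choose (K - 1) := by
  classical
  have hedge : H.edgeFinset.card + 1 = N := by rw [← hN]; exact hH.card_edgeFinset
  have hacyc : H.IsAcyclic := hH.2
  -- components of a forest obtained by deleting edges
  have hcardCC : ∀ S : Finset (Sym2 V), S ⊆ H.edgeFinset →
      (Finpartition.ofSetoid
          (H.deleteEdges (S : Set (Sym2 V))).reachableSetoid).parts.card
        + (H.edgeFinset.card - S.card) = N := by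
    intro S hS
    rw [card_parts_ofSetoid]
    have h1 : Nat.card (Quotient (H.deleteEdges (S : Set (Sym2 V))).reachableSetoid)
        = Nat.card (H.deleteEdges (S : Set (Sym2 V))).ConnectedComponent := rfl
    have hsub : H.deleteEdges (S : Set (Sym2 V)) ≤ H := SimpleGraph.deleteEdges_le _
    have hacyc' : (H.deleteEdges (S : Set (Sym2 V))).IsAcyclic := fun v p hp =>
      hacyc (p.mapLe hsub) (hp.mapLe hsub)
    have hA := card_cc_add_card_edges (H.deleteEdges (S : Set (Sym2 V))) hacyc'
    have h2 : Nat.card (H.deleteEdges (S : Set (Sym2 V))).edgeSet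
        = H.edgeFinset.card - S.card := by
      rw [Nat.card_eq_fintype_card, ← SimpleGraph.edgeFinset_card,
        SimpleGraph.edgeFinset_deleteEdges, Finset.card_sdiff_of_subset hS]
    rw [h1]
    omega
  have ht : (H.edgeFinset.powersetCard (K - 1)).card = (N - 1).choose (K - 1) := by
    rw [Finset.card_powersetCard]
    congr 1
    omega
  rw [← ht]
  refine Finset.card_bij' (fun P _ => cutF H P)
    (fun S _ => Finpartition.ofSetoid
      (H.deleteEdges (S : Set (Sym2 V))).reachableSetoid) ?_ ?_ ?_ ?_
  · -- cutF lands in powersetCard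
    intro P hP
    rw [Finset.mem_filter] at hP
    obtain ⟨-, hK, hconn⟩ := hP
    have hsub : cutF H P ⊆ H.edgeFinset := fun e he =>
      SimpleGraph.mem_edgeFinset.mpr (mem_cutF.mp he).1
    rw [Finset.mem_powersetCard]
    refine ⟨hsub, ?_⟩
    show (cutF H P).card = K - 1
    have hP2 := fact2 P hconn
    have := hcardCC (cutF H P) hsub
    rw [← hP2, hK] at this
    have hle := Finset.card_le_card hsub
    omega
  · -- ofSetoid lands in the filter
    intro S hS
    rw [Finset.mem_powersetCard] at hS
    obtain ⟨hsub, hcard⟩ := hS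
    rw [Finset.mem_filter]
    refine ⟨Finset.mem_univ _, ?_, parts_ofSetoid_connected (SimpleGraph.deleteEdges_le _)⟩
    show (Finpartition.ofSetoid
        (H.deleteEdges (S : Set (Sym2 V))).reachableSetoid).parts.card = K
    have := hcardCC S hsub
    have hle := Finset.card_le_card hsub
    rw [hcard] at this hle
    omega
  · intro P hP
    rw [Finset.mem_filter] at hP
    exact (fact2 P hP.2.2).symm
  · intro S hS
    rw [Finset.mem_powersetCard] at hS
    exact fact3c hacyc hS.1

end Helpers

open scoped Classical in
/-- **Normalization of the contiguity-constrained prior.**  For a finite simple graph `G`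
on `N` vertices and `1 ≤ K ≤ N`, summing the number `N(P)` of spanning trees compatible
with `P` over all partitions `P` of the vertex set into exactly `K` nonempty blocks gives
`t(G) · C(N−1, K−1)`. -/
theorem contiguity_prior_normalization {V : Type*} [Fintype V] [DecidableEq V]
    (G : SimpleGraph V) {N K : ℕ} (hN : Fintype.card V = N) (hK1 : 1 ≤ K) (hKN : K ≤ N) :
    ∑ P ∈ Finset.univ.filter
        (fun P : Finpartition (Finset.univ : Finset V) => P.parts.card = K),
        compatibleTreeCount G P =
      spanningTreeCount G * (N - 1).choose (K - 1) := by
  classical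
  have hst : spanningTreeCount G
      = (Finset.univ.filter fun H : SimpleGraph V => H ≤ G ∧ H.IsTree).card := by
    rw [spanningTreeCount, Nat.card_eq_fintype_card, Fintype.card_subtype]
  have hcompat : ∀ P : Finpartition (Finset.univ : Finset V),
      compatibleTreeCount G P
        = ((Finset.univ.filter fun H : SimpleGraph V => H ≤ G ∧ H.IsTree).filter
            fun H => ∀ p ∈ P.parts, (H.induce (p : Set V)).Connected).card := by
    intro P
    rw [compatibleTreeCount, Nat.card_eq_fintype_card, Fintype.card_subtype,
      Finset.filter_filter]
    congr 1
    ext H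
    simp [and_assoc]
  calc ∑ P ∈ Finset.univ.filter
        (fun P : Finpartition (Finset.univ : Finset V) => P.parts.card = K),
        compatibleTreeCount G P
      = ∑ P ∈ Finset.univ.filter
          (fun P : Finpartition (Finset.univ : Finset V) => P.parts.card = K),
          ∑ H ∈ Finset.univ.filter (fun H : SimpleGraph V => H ≤ G ∧ H.IsTree),
            (if ∀ p ∈ P.parts, (H.induce (p : Set V)).Connected then 1 else 0) := by
        refine Finset.sum_congr rfl fun P _ => ?_
        rw [hcompat P, Finset.card_filter]
    _ = ∑ H ∈ Finset.univ.filter (fun H : SimpleGraph V => H ≤ G ∧ H.IsTree),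
          ∑ P ∈ Finset.univ.filter
            (fun P : Finpartition (Finset.univ : Finset V) => P.parts.card = K),
            (if ∀ p ∈ P.parts, (H.induce (p : Set V)).Connected then 1 else 0) :=
        Finset.sum_comm
    _ = ∑ H ∈ Finset.univ.filter (fun H : SimpleGraph V => H ≤ G ∧ H.IsTree),
          (N - 1).choose (K - 1) := by
        refine Finset.sum_congr rfl fun H hH => ?_
        rw [Finset.mem_filter] at hH
        rw [← Finset.card_filter, Finset.filter_filter]
        exact key_count H hH.2.2 hN hK1 hKN
    _ = spanningTreeCount G * (N - 1).choose (K - 1) := by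
        rw [Finset.sum_const, smul_eq_mul, hst]
end
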